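/- arXiv:1303.0004 — 11 statements merged into one kernel-verified Lean document; each statement's English description precedes it below -/
import Mathlib

section
/- A subset A of Q^n (Q a finite alphabet of size q) with 0 ∈ A is propelinear (i.e., the stabilizer of A in the isometry group of the Hamming space contains a subgroup of cardinality |A| acting transitively on A) if and only if A can be equipped with a binary operation * : A × A → A such that (1) for each a ∈ A the map x ↦ a*x extends to an isometry of Q^n, (2) a*0 = a for all a ∈ A, and (3) * is associative. -/
set_option linter.unusedSectionVars false
set_option maxHeartbeats 1000000
open Finset Function

namespace PropelinearAux

variable {Q : Type} [Fintype Q] [DecidableEq Q] {n : ℕ}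

def Δ (x y : Fin n → Q) : Finset (Fin n) := Finset.univ.filter fun i => x i ≠ y i

lemma mem_Δ {x y : Fin n → Q} {i : Fin n} : i ∈ Δ x y ↔ x i ≠ y i := by
  simp [Δ]

lemma Δ_comm (x y : Fin n → Q) : Δ x y = Δ y x := by
  ext i; simp [mem_Δ, ne_comm]

lemma hd_eq (x y : Fin n → Q) : hammingDist x y = (Δ x y).card := rfl

lemma Δ_eq_empty {x y : Fin n → Q} (h : Δ x y = ∅) : x = y := by
  funext i
  by_contra hne
  exact Finset.notMem_empty i (h ▸ mem_Δ.mpr hne)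

lemma Δ_update {x : Fin n → Q} {i : Fin n} {v : Q} (hv : v ≠ x i) :
    Δ x (update x i v) = {i} := by
  ext j
  rcases eq_or_ne j i with rfl | hj
  · simp [mem_Δ, update_self, Ne.symm hv]
  · simp [mem_Δ, update_of_ne hj, hj]

lemma Δ_triangle (a b c : Fin n → Q) : Δ a c ⊆ Δ a b ∪ Δ b c := by
  intro k hk
  rw [mem_Δ] at hk
  by_cases h1 : a k = b k
  · exact Finset.mem_union_right _ (mem_Δ.mpr (h1 ▸ hk))
  · exact Finset.mem_union_left _ (mem_Δ.mpr h1)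

section isometry

variable (g : (Fin n → Q) → (Fin n → Q))
variable (hg : ∀ x y, hammingDist (g x) (g y) = hammingDist x y)

include hg

lemma card_Δ_g (x y : Fin n → Q) : (Δ (g x) (g y)).card = (Δ x y).card := hg x y

lemma d_exists (x : Fin n → Q) (i : Fin n) :
    ∃ j, ∀ v, v ≠ x i → Δ (g x) (g (update x i v)) = {j} := by
  classical
  -- for each valid v there is a unique difference coordinate
  have single : ∀ v, v ≠ x i → ∃ j, Δ (g x) (g (update x i v)) = {j} := by
    intro v hv
    have h1 : (Δ (g x) (g (update x i v))).card = 1 := by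
      rw [card_Δ_g g hg, Δ_update hv, Finset.card_singleton]
    exact Finset.card_eq_one.mp h1
  rcases subsingleton_or_nontrivial Q with hQ | hQ
  · exact ⟨i, fun v hv => absurd (Subsingleton.elim v (x i)) hv⟩
  obtain ⟨v₀, hv₀⟩ := exists_ne (x i)
  obtain ⟨j₀, hj₀⟩ := single v₀ hv₀
  refine ⟨j₀, fun v hv => ?_⟩
  obtain ⟨j, hj⟩ := single v hv
  rw [hj]
  by_cases hvv : v = v₀
  · subst hvv; rw [hj] at hj₀; exact hj₀
  -- v ≠ v₀ : the two updated points are at distance 1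
  have hdist : (Δ (g (update x i v)) (g (update x i v₀))).card = 1 := by
    rw [card_Δ_g g hg]
    have : update x i v₀ = update (update x i v) i v₀ := by rw [update_idem]
    rw [this, Δ_update (by rw [update_self]; exact fun h => hvv h.symm)]
    exact Finset.card_singleton _
  suffices hjj : j = j₀ by rw [hjj]
  by_contra hne
  have h1 : j ∈ Δ (g (update x i v)) (g (update x i v₀)) := by
    rw [mem_Δ]
    have hx1 : g (update x i v) j ≠ g x j := by
      have := mem_Δ.mp (by rw [hj]; exact Finset.mem_singleton_self j)
      exact fun h => this h.symm
    have hx2 : g x j = g (update x i v₀) j := by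
      by_contra h
      have : j ∈ Δ (g x) (g (update x i v₀)) := mem_Δ.mpr h
      rw [hj₀, Finset.mem_singleton] at this
      first | exact hne this | exact hne this.symm
    exact fun h => hx1 (h.trans hx2.symm)
  have h2 : j₀ ∈ Δ (g (update x i v)) (g (update x i v₀)) := by
    rw [mem_Δ]
    have hx1 : g x j₀ ≠ g (update x i v₀) j₀ :=
      mem_Δ.mp (by rw [hj₀]; exact Finset.mem_singleton_self j₀)
    have hx2 : g (update x i v) j₀ = g x j₀ := by
      by_contra h
      have : j₀ ∈ Δ (g x) (g (update x i v)) := mem_Δ.mpr fun hh => h hh.symm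
      rw [hj, Finset.mem_singleton] at this
      first | exact hne this | exact hne this.symm
    exact fun h => hx1 (hx2 ▸ h)
  have : ({j, j₀} : Finset (Fin n)) ⊆ Δ (g (update x i v)) (g (update x i v₀)) := by
    intro k hk
    rcases Finset.mem_insert.mp hk with rfl | hk
    · exact h1
    · rwa [Finset.mem_singleton.mp hk]
  have hcard2 : (2 : ℕ) ≤ 1 := by
    calc (2 : ℕ) = ({j, j₀} : Finset (Fin n)).card := (Finset.card_pair hne).symm
    _ ≤ _ := Finset.card_le_card this
    _ = 1 := hdist
  omega

noncomputable def dd (x : Fin n → Q) (i : Fin n) : Fin n := (d_exists g hg x i).choose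

lemma dd_spec {x : Fin n → Q} {i : Fin n} {v : Q} (hv : v ≠ x i) :
    Δ (g x) (g (update x i v)) = {dd g hg x i} :=
  (d_exists g hg x i).choose_spec v hv

end isometry


section isometry2

variable (g : (Fin n → Q) → (Fin n → Q))
variable (hg : ∀ x y, hammingDist (g x) (g y) = hammingDist x y)

include hg

lemma dd_step (y : Fin n → Q) (j : Fin n) (w : Q) (hw : w ≠ y j) (i : Fin n) :
    dd g hg (update y j w) i = dd g hg y i := by
  classical
  rcases eq_or_ne j i with rfl | hj
  · -- same coordinate
    set y' := update y j w with hy'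
    have h1 : Δ (g y') (g (update y' j (y j))) = {dd g hg y' j} :=
      dd_spec g hg (by rw [hy', update_self]; exact fun h => hw h.symm)
    have h2 : update y' j (y j) = y := by
      rw [hy', update_idem, update_eq_self]
    rw [h2] at h1
    have h3 : Δ (g y) (g (update y j w)) = {dd g hg y j} := dd_spec g hg hw
    have : ({dd g hg y' j} : Finset (Fin n)) = {dd g hg y j} := by
      rw [← h1, Δ_comm, h3]
    exact Finset.singleton_inj.mp this
  · -- different coordinate: the square argument
    have hQ : Nontrivial Q := ⟨_, _, hw⟩
    set y' := update y j w with hy'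
    obtain ⟨v, hv⟩ := exists_ne (y i)
    have hyi' : y' i = y i := by rw [hy', update_of_ne (Ne.symm hj)]
    set z := update y i v with hz
    set z' := update y' i v with hz'
    have hα : Δ (g y) (g z) = {dd g hg y i} := dd_spec g hg hv
    have hβ : Δ (g y') (g z') = {dd g hg y' i} := dd_spec g hg (by rw [hyi']; exact hv)
    have hyy' : (Δ (g y) (g y')).card = 1 := by
      rw [card_Δ_g g hg, hy', Δ_update hw, Finset.card_singleton]
    obtain ⟨γ, hγ⟩ := Finset.card_eq_one.mp hyy'
    set α := dd g hg y i with hαd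
    set β := dd g hg y' i with hβd
    by_contra hne
    change β ≠ α at hne
    have hvalz' : ∀ k, z' k = if k = i then v else if k = j then w else y k := by
      intro k
      simp [hz', hy', Function.update_apply]
    have hvalz : ∀ k, z k = if k = i then v else y k := by
      intro k
      simp [hz, Function.update_apply]
    have hvaly' : ∀ k, y' k = if k = j then w else y k := by
      intro k
      simp [hy', Function.update_apply]
    -- z' = update z j w
    have hz'z : z' = update z j w := by
      funext k
      rw [hvalz' k, Function.update_apply, hvalz k]
      by_cases h1 : k = i
      · subst h1
        simp [Ne.symm hj]
      · by_cases h2 : k = j <;> simp [h1, h2, Ne.symm hj, hj]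
    have hwzj : w ≠ z j := by rw [hz, update_of_ne hj]; exact hw
    -- dist(z,z') = 1
    have hzz' : (Δ (g z) (g z')).card = 1 := by
      rw [card_Δ_g g hg, hz'z, Δ_update hwzj, Finset.card_singleton]
    -- dist(y, z') = 2
    have hΔyz' : Δ y z' = {i, j} := by
      ext k
      rw [mem_Δ, hvalz' k]
      by_cases hki : k = i
      · subst hki
        simp [hv, Ne.symm hv]
      · by_cases hkj : k = j
        · subst hkj
          simp [hki, hw, Ne.symm hw]
        · simp [hki, hkj]
    have hyz2 : (Δ (g y) (g z')).card = 2 := by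
      rw [card_Δ_g g hg, hΔyz', Finset.card_pair hj.symm ]
    -- dist(z, y') = 2
    have hΔzy' : Δ z y' = {i, j} := by
      ext k
      rw [mem_Δ, hvalz k, hvaly' k]
      by_cases hki : k = i
      · subst hki
        simp [hj, Ne.symm hj, hv, Ne.symm hv]
      · by_cases hkj : k = j
        · subst hkj
          simp [hki, hw, Ne.symm hw]
        · simp [hki, hkj]
    have hzy2 : (Δ (g z) (g y')).card = 2 := by
      rw [card_Δ_g g hg, hΔzy', Finset.card_pair hj.symm]
    -- Δ (g y) (g z') ⊆ {γ, β}
    have hsub1 : Δ (g y) (g z') ⊆ {γ, β} := by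
      intro k hk
      have := Δ_triangle (g y) (g y') (g z') hk
      rcases Finset.mem_union.mp this with h | h
      · rw [hγ, Finset.mem_singleton] at h
        exact Finset.mem_insert.mpr (Or.inl h)
      · rw [hβ, Finset.mem_singleton] at h
        simp [h]
    have heq1 : Δ (g y) (g z') = {γ, β} := by
      apply Finset.eq_of_subset_of_card_le hsub1
      rw [hyz2]
      exact Finset.card_insert_le _ _ |>.trans (by simp)
    have hγβ : γ ≠ β := by
      intro h
      rw [heq1, h] at hyz2
      simp at hyz2
    -- Δ (g z) (g y') ⊆ {α, γ}
    have hsub2 : Δ (g z) (g y') ⊆ {α, γ} := by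
      intro k hk
      have := Δ_triangle (g z) (g y) (g y') hk
      rcases Finset.mem_union.mp this with h | h
      · rw [Δ_comm] at h
        rw [hα, Finset.mem_singleton] at h
        exact Finset.mem_insert.mpr (Or.inl h)
      · rw [hγ, Finset.mem_singleton] at h
        simp [h]
    have heq2 : Δ (g z) (g y') = {α, γ} := by
      apply Finset.eq_of_subset_of_card_le hsub2
      rw [hzy2]
      exact Finset.card_insert_le _ _ |>.trans (by simp)
    have hαγ : α ≠ γ := by
      intro h
      rw [heq2, h] at hzy2
      simp at hzy2
    -- now derive: g z and g z' differ at α and at β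
    have hmemα : α ∈ Δ (g z) (g z') := by
      rw [mem_Δ]
      have h1 : g z α ≠ g y α := by
        have := mem_Δ.mp (hα ▸ Finset.mem_singleton_self α)
        exact fun h => this h.symm
      have h2 : g y α = g y' α := by
        by_contra h
        have := hγ ▸ mem_Δ.mpr h
        rw [Finset.mem_singleton] at this
        exact hαγ this
      have h3 : g y' α = g z' α := by
        by_contra h
        have := hβ ▸ mem_Δ.mpr h
        rw [Finset.mem_singleton] at this
        first | exact hne this | exact hne this.symm
      rw [← h3, ← h2]
      exact h1
    have hmemβ : β ∈ Δ (g z) (g z') := by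
      rw [mem_Δ]
      have h1 : g y' β ≠ g z' β := mem_Δ.mp (hβ ▸ Finset.mem_singleton_self β)
      have h2 : g y β = g y' β := by
        by_contra h
        have := hγ ▸ mem_Δ.mpr h
        rw [Finset.mem_singleton] at this
        exact hγβ this.symm
      have h3 : g z β = g y β := by
        by_contra h
        have := hα ▸ mem_Δ.mpr (fun hh => h hh.symm)
        rw [Finset.mem_singleton] at this
        first | exact hne this | exact hne this.symm
      rw [h3, h2]
      exact h1
    have : ({α, β} : Finset (Fin n)) ⊆ Δ (g z) (g z') := by
      intro k hk
      rcases Finset.mem_insert.mp hk with rfl | hk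
      · exact hmemα
      · rwa [Finset.mem_singleton.mp hk]
    have : (2:ℕ) ≤ 1 := by
      calc (2:ℕ) = ({α, β} : Finset (Fin n)).card := (Finset.card_pair (Ne.symm hne)).symm
      _ ≤ _ := Finset.card_le_card this
      _ = 1 := hzz'
    omega

lemma dd_const (x y : Fin n → Q) (i : Fin n) : dd g hg x i = dd g hg y i := by
  classical
  suffices h : ∀ (k : ℕ) (x y : Fin n → Q), hammingDist x y ≤ k → dd g hg x i = dd g hg y i by
    exact h (hammingDist x y) x y le_rfl
  intro k
  induction k with
  | zero =>
    intro x y h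
    have : x = y := hammingDist_eq_zero.mp (Nat.le_zero.mp h)
    rw [this]
  | succ k ih =>
    intro x y h
    by_cases hxy : x = y
    · rw [hxy]
    · obtain ⟨j, hj⟩ : ∃ j, x j ≠ y j := by
        by_contra hc
        push_neg at hc
        exact hxy (funext hc)
      have hΔ : Δ x (update y j (x j)) = (Δ x y).erase j := by
        ext k'
        rcases eq_or_ne k' j with rfl | hk'
        · simp [mem_Δ, update_self]
        · simp [mem_Δ, update_of_ne hk', hk']
      have hlt : hammingDist x (update y j (x j)) ≤ k := by
        rw [hd_eq, hΔ]
        have hjard : j ∈ Δ x y := mem_Δ.mpr hj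
        have := Finset.card_erase_of_mem hjard
        rw [this]
        have : (Δ x y).card ≤ k + 1 := h
        omega
      have h1 := ih x (update y j (x j)) hlt
      have h2 : dd g hg (update y j (x j)) i = dd g hg y i :=
        dd_step g hg y j (x j) hj i
      rw [h1, h2]

end isometry2

section isometry3

variable (g : (Fin n → Q) → (Fin n → Q))
variable (hg : ∀ x y, hammingDist (g x) (g y) = hammingDist x y)

include hg

lemma dd_spec' [Nontrivial Q] (x₀ x : Fin n → Q) {i : Fin n} {v : Q} (hv : v ≠ x i) :
    Δ (g x) (g (update x i v)) = {dd g hg x₀ i} := by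
  rw [dd_spec g hg hv, dd_const g hg x x₀ i]

lemma dd_inj [Nontrivial Q] (x₀ : Fin n → Q) : Function.Injective (dd g hg x₀) := by
  classical
  intro i j hij
  by_contra hne
  obtain ⟨v, hv⟩ := exists_ne (x₀ i)
  set y := update x₀ i v with hy
  have hyj : y j = x₀ j := by rw [hy, update_of_ne (Ne.symm hne)]
  obtain ⟨w, hw⟩ := exists_ne (x₀ j)
  set z := update y j w with hz
  have h1 : Δ (g x₀) (g y) = {dd g hg x₀ i} := dd_spec' g hg x₀ x₀ hv
  have h2 : Δ (g y) (g z) = {dd g hg x₀ j} := dd_spec' g hg x₀ y (by rw [hyj]; exact hw)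
  have hΔ : Δ x₀ z = {i, j} := by
    ext k
    rw [mem_Δ]
    have hzk : z k = if k = j then w else if k = i then v else x₀ k := by
      simp [hz, hy, Function.update_apply]
    rw [hzk]
    by_cases hki : k = i
    · subst hki
      simp [hne, hv, Ne.symm hv]
    · by_cases hkj : k = j
      · subst hkj
        simp [hw, Ne.symm hw, hki]
      · simp [hki, hkj]
  have hcard2 : (Δ (g x₀) (g z)).card = 2 := by
    rw [card_Δ_g g hg, hΔ, Finset.card_pair hne]
  have hsub : Δ (g x₀) (g z) ⊆ {dd g hg x₀ i} := by
    intro k hk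
    have := Δ_triangle (g x₀) (g y) (g z) hk
    rcases Finset.mem_union.mp this with h | h
    · rwa [h1] at h
    · rw [h2] at h
      rw [Finset.mem_singleton] at h ⊢
      rw [h, hij]
  have := Finset.card_le_card hsub
  rw [hcard2, Finset.card_singleton] at this
  omega

lemma Δ_image [Nontrivial Q] (x₀ : Fin n → Q) (x y : Fin n → Q) :
    Δ (g x) (g y) = (Δ x y).image (dd g hg x₀) := by
  classical
  suffices h : ∀ (k : ℕ) (x y : Fin n → Q), (Δ x y).card ≤ k →
      Δ (g x) (g y) = (Δ x y).image (dd g hg x₀) by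
    exact h (Δ x y).card x y le_rfl
  intro k
  induction k with
  | zero =>
    intro x y h
    have hxy : x = y := Δ_eq_empty (Finset.card_eq_zero.mp (Nat.le_zero.mp h))
    subst hxy
    have : Δ x x = ∅ := by
      ext k; simp [mem_Δ]
    rw [this]
    have : Δ (g x) (g x) = ∅ := by
      ext k; simp [mem_Δ]
    rw [this]
    simp
  | succ k ih =>
    intro x y h
    by_cases hxy : Δ x y = ∅
    · have := Δ_eq_empty hxy
      subst this
      rw [hxy]
      have : Δ (g x) (g x) = ∅ := by ext k; simp [mem_Δ]
      rw [this]
      simp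
    · obtain ⟨j, hj⟩ := Finset.nonempty_iff_ne_empty.mpr hxy
      have hjne : x j ≠ y j := mem_Δ.mp hj
      set y' := update y j (x j) with hy'
      have hΔ' : Δ x y' = (Δ x y).erase j := by
        ext k'
        rcases eq_or_ne k' j with rfl | hk'
        · simp [mem_Δ, hy', update_self]
        · simp [mem_Δ, hy', update_of_ne hk', hk']
      have hcard' : (Δ x y').card ≤ k := by
        rw [hΔ', Finset.card_erase_of_mem hj]
        have : (Δ x y).card ≤ k + 1 := h
        omega
      have ih1 := ih x y' hcard'
      have hstep : Δ (g y') (g y) = {dd g hg x₀ j} := by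
        have hupd : y = update y' j (y j) := by
          rw [hy', update_idem, update_eq_self]
        have hne2 : y j ≠ y' j := by
          rw [hy', update_self]; exact fun hh => hjne hh.symm
        calc Δ (g y') (g y) = Δ (g y') (g (update y' j (y j))) := by rw [← hupd]
        _ = {dd g hg x₀ j} := dd_spec' g hg x₀ y' hne2
      have hsub : Δ (g x) (g y) ⊆ (Δ x y).image (dd g hg x₀) := by
        intro k' hk'
        have := Δ_triangle (g x) (g y') (g y) hk'
        rcases Finset.mem_union.mp this with hmem | hmem
        · rw [ih1] at hmem
          exact Finset.image_subset_image (Finset.erase_subset j (Δ x y)) (hΔ' ▸ hmem)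
        · rw [hstep, Finset.mem_singleton] at hmem
          subst hmem
          exact Finset.mem_image_of_mem _ hj
      apply Finset.eq_of_subset_of_card_le hsub
      calc ((Δ x y).image (dd g hg x₀)).card ≤ (Δ x y).card := Finset.card_image_le
      _ = (Δ (g x) (g y)).card := (card_Δ_g g hg x y).symm

/-- Key structural lemma: any Hamming isometry respects coordinates via an
injective coordinate map. -/
theorem key_isometry :
    ∃ π : Fin n → Fin n, Function.Injective π ∧
      ∀ (x y : Fin n → Q) (i : Fin n), x i = y i ↔ g x (π i) = g y (π i) := by
  classical
  rcases subsingleton_or_nontrivial Q with hQ | hQ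
  · refine ⟨id, Function.injective_id, fun x y i => ?_⟩
    constructor
    · intro _; exact Subsingleton.elim _ _
    · intro _; exact Subsingleton.elim _ _
  · have : Nonempty Q := ⟨Classical.arbitrary Q⟩
    set x₀ : Fin n → Q := fun _ => Classical.arbitrary Q with hx₀
    refine ⟨dd g hg x₀, dd_inj g hg x₀, fun x y i => ?_⟩
    have himg := Δ_image g hg x₀ x y
    constructor
    · intro hxy
      by_contra hne
      have : dd g hg x₀ i ∈ Δ (g x) (g y) := mem_Δ.mpr hne
      rw [himg] at this
      obtain ⟨i', hi', heq⟩ := Finset.mem_image.mp this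
      have : i' = i := dd_inj g hg x₀ heq
      subst this
      exact mem_Δ.mp hi' hxy
    · intro hgxy
      by_contra hne
      have : dd g hg x₀ i ∈ Δ (g x) (g y) := by
        rw [himg]
        exact Finset.mem_image_of_mem _ (mem_Δ.mpr hne)
      exact mem_Δ.mp this hgxy

end isometry3

section mmap

variable {β : Type} [LinearOrder β]

/-- The monotone matching between two finsets of equal cardinality. -/
noncomputable def mmap (s t : Finset β) (v : β) : β :=
  if h : s.card = t.card ∧ v ∈ s then
    (t.orderIsoOfFin h.1.symm ((s.orderIsoOfFin rfl).symm ⟨v, h.2⟩) : β)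
  else v

lemma mmap_mem {s t : Finset β} (h1 : s.card = t.card) {v : β} (hv : v ∈ s) :
    mmap s t v ∈ t := by
  rw [mmap, dif_pos ⟨h1, hv⟩]
  exact Subtype.mem _

lemma mmap_self (s : Finset β) (v : β) : mmap s s v = v := by
  rw [mmap]
  by_cases h : s.card = s.card ∧ v ∈ s
  · rw [dif_pos h]
    have : (s.orderIsoOfFin h.1.symm) = (s.orderIsoOfFin rfl) := rfl
    rw [this, OrderIso.apply_symm_apply]
  · rw [dif_neg h]

lemma mmap_comp {s t u : Finset β} (h1 : s.card = t.card) (h2 : t.card = u.card)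
    {v : β} (hv : v ∈ s) : mmap t u (mmap s t v) = mmap s u v := by
  have hmem := mmap_mem h1 hv
  have hval : mmap s t v = (t.orderIsoOfFin h1.symm ((s.orderIsoOfFin rfl).symm ⟨v, hv⟩) : β) := by
    rw [mmap, dif_pos ⟨h1, hv⟩]
  have e3 : mmap t u (mmap s t v) =
      (u.orderIsoOfFin h2.symm ((t.orderIsoOfFin rfl).symm ⟨mmap s t v, hmem⟩) : β) := by
    rw [mmap, dif_pos ⟨h2, hmem⟩]
  have e2 : mmap s u v =
      (u.orderIsoOfFin (h1.trans h2).symm ((s.orderIsoOfFin rfl).symm ⟨v, hv⟩) : β) := by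
    rw [mmap, dif_pos ⟨h1.trans h2, hv⟩]
  rw [e3, e2]
  have hsub : (⟨mmap s t v, hmem⟩ : {x // x ∈ t}) =
      t.orderIsoOfFin h1.symm ((s.orderIsoOfFin rfl).symm ⟨v, hv⟩) := Subtype.ext hval
  rw [hsub]
  have : ∀ (k : ℕ) (hk : t.card = k) (x : Fin k),
      (t.orderIsoOfFin rfl).symm (t.orderIsoOfFin hk x) = Fin.cast hk.symm x := by
    intro k hk x
    subst hk
    simp
  rw [this _ h1.symm _]
  -- now : u.orderIsoOfFin h2.symm (Fin.cast h1 (...)) = u.orderIsoOfFin (h1.trans h2).symm (...)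
  have : ∀ (k k' : ℕ) (hk : u.card = k) (hk' : u.card = k') (x : Fin k) (x' : Fin k'),
      (x : ℕ) = (x' : ℕ) → (u.orderIsoOfFin hk x : β) = u.orderIsoOfFin hk' x' := by
    intro k k' hk hk' x x' hxx
    subst hk
    have : k' = u.card := hk'.symm
    subst this
    have : x = x' := Fin.ext hxx
    rw [this]
  apply this
  simp

end mmap

section canon

variable (A : Set (Fin n → Q))

/-- `rel A f i j` : coordinate `i` of arguments determines coordinate `j` of values of `f`. -/
def rel (f : A → A) (i j : Fin n) : Prop :=
  ∀ x y : A, ((x : Fin n → Q) i = (y : Fin n → Q) i ↔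
    (f x : Fin n → Q) j = (f y : Fin n → Q) j)

open Classical in
noncomputable def DD (f : A → A) (i : Fin n) : Finset (Fin n) :=
  Finset.univ.filter (fun j => rel A f i j)

lemma mem_DD {f : A → A} {i j : Fin n} : j ∈ DD A f i ↔ rel A f i j := by
  simp [DD]

lemma rel_id (i : Fin n) : rel A id i i := fun _ _ => Iff.rfl

lemma mem_DD_self (i : Fin n) : i ∈ DD A id i := (mem_DD A).mpr (rel_id A i)

lemma rel_r1 {f : A → A} {i i' j : Fin n} (h : rel A f i j) (h' : rel A f i' j) :
    rel A id i i' := fun x y => (h x y).trans (h' x y).symm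

lemma rel_r2 {f : A → A} {i i' j : Fin n} (h : rel A id i i') (h' : rel A f i' j) :
    rel A f i j := fun x y => (h x y).trans (h' x y)

lemma rel_r3 {f : A → A} (hs : Function.Surjective f) {i j j' : Fin n}
    (h : rel A f i j) (h' : rel A f i j') : rel A id j j' := by
  intro u v
  obtain ⟨x, rfl⟩ := hs u
  obtain ⟨y, rfl⟩ := hs v
  exact (h x y).symm.trans (h' x y)

lemma rel_r4 {f : A → A} {i j j' : Fin n} (h : rel A f i j) (h' : rel A id j j') :
    rel A f i j' := fun x y => (h x y).trans (h' (f x) (f y))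

lemma rel_r5 {f f' : A → A} {i j k : Fin n} (h : rel A f' i j) (h' : rel A f j k) :
    rel A (f ∘ f') i k := fun x y => (h x y).trans (h' (f' x) (f' y))

lemma rel_r5' {f f' : A → A} (hs : Function.Surjective f') {i j k : Fin n}
    (h : rel A f' i j) (hc : rel A (f ∘ f') i k) : rel A f j k := by
  intro u v
  obtain ⟨x, rfl⟩ := hs u
  obtain ⟨y, rfl⟩ := hs v
  exact (h x y).symm.trans (hc x y)

/-- `f` is bijective and admits a coordinate correspondence. -/
def Feas (f : A → A) : Prop :=
  Function.Bijective f ∧ ∃ π : Fin n → Fin n, Function.Injective π ∧ ∀ i, rel A f i (π i)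

lemma feas_id : Feas A id := ⟨Function.bijective_id, id, Function.injective_id, rel_id A⟩

lemma feas_comp {f f' : A → A} (hf : Feas A f) (hf' : Feas A f') : Feas A (f ∘ f') := by
  obtain ⟨hb, π, hπi, hπ⟩ := hf
  obtain ⟨hb', π', hπi', hπ'⟩ := hf'
  exact ⟨hb.comp hb', π ∘ π', hπi.comp hπi',
    fun i => rel_r5 A (hπ' i) (hπ (π' i))⟩

lemma card_DD {f : A → A} (hf : Feas A f) (i : Fin n) :
    (DD A f i).card = (DD A id i).card := by
  classical
  obtain ⟨hb, π, hπi, hπ⟩ := hf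
  have himg : DD A f i = (DD A id i).image π := by
    ext j
    rw [mem_DD, Finset.mem_image]
    constructor
    · intro hj
      obtain ⟨i', rfl⟩ := Finite.injective_iff_surjective.mp hπi j
      exact ⟨i', (mem_DD A).mpr (rel_r1 A hj (hπ i')), rfl⟩
    · rintro ⟨i', hi', rfl⟩
      exact rel_r2 A ((mem_DD A).mp hi') (hπ i')
  rw [himg, Finset.card_image_of_injective _ hπi]

section order

variable [LinearOrder Q]

noncomputable def pihat (f : A → A) (i : Fin n) : Fin n :=
  mmap (DD A id i) (DD A f i) i

lemma pihat_rel {f : A → A} (hf : Feas A f) (i : Fin n) : rel A f i (pihat A f i) :=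
  (mem_DD A).mp (mmap_mem (card_DD A hf i).symm (mem_DD_self A i))

lemma pihat_id (i : Fin n) : pihat A id i = i := mmap_self _ _

lemma class_eq {f : A → A} (hs : Function.Surjective f) {i j : Fin n}
    (hj : rel A f i j) : DD A id j = DD A f i := by
  ext j'
  rw [mem_DD, mem_DD]
  exact ⟨fun h => rel_r4 A hj h, fun h => rel_r3 A hs hj h⟩

lemma DD_comp {f f' : A → A} (hs' : Function.Surjective f') {i j : Fin n}
    (hj : rel A f' i j) (k : Fin n) : (k ∈ DD A f j) ↔ k ∈ DD A (f ∘ f') i := by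
  rw [mem_DD, mem_DD]
  exact ⟨fun h => rel_r5 A hj h, fun h => rel_r5' A hs' hj h⟩

lemma pihat_comp {f f' : A → A} (hf : Feas A f) (hf' : Feas A f') (i : Fin n) :
    pihat A f (pihat A f' i) = pihat A (f ∘ f') i := by
  set j := pihat A f' i with hjd
  have hj : rel A f' i j := pihat_rel A hf' i
  have h1 : DD A id j = DD A f' i := class_eq A hf'.1.surjective hj
  have h2 : DD A f j = DD A (f ∘ f') i := by
    ext k; exact DD_comp A hf'.1.surjective hj k
  show mmap (DD A id j) (DD A f j) j = mmap (DD A id i) (DD A (f ∘ f') i) i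
  rw [h1, h2]
  have c1 : (DD A id i).card = (DD A f' i).card := (card_DD A hf' i).symm
  have c2 : (DD A f' i).card = (DD A (f ∘ f') i).card := by
    rw [card_DD A hf' i, card_DD A (feas_comp A hf hf') i]
  have hji : j = mmap (DD A id i) (DD A f' i) i := hjd
  rw [hji]
  exact mmap_comp c1 c2 (mem_DD_self A i)

lemma pihat_inv {f f' : A → A} (hf : Feas A f) (hf' : Feas A f')
    (hff' : f ∘ f' = id) (j : Fin n) : pihat A f (pihat A f' j) = j := by
  rw [pihat_comp A hf hf', hff', pihat_id]

open Classical in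
noncomputable def Wv (i : Fin n) : Finset Q :=
  Finset.univ.filter (fun v => ∃ x : A, (x : Fin n → Q) i = v)

lemma mem_Wv {i : Fin n} {v : Q} : v ∈ Wv A i ↔ ∃ x : A, (x : Fin n → Q) i = v := by
  simp [Wv]

open Classical in
noncomputable def sigmahat (f : A → A) (i : Fin n) (v : Q) : Q :=
  if h : ∃ x : A, (x : Fin n → Q) i = v then
    (f h.choose : Fin n → Q) (pihat A f i)
  else mmap ((Wv A i)ᶜ) ((Wv A (pihat A f i))ᶜ) v

lemma sigmahat_forced {f : A → A} (hf : Feas A f) (i : Fin n) (x : A) :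
    sigmahat A f i ((x : Fin n → Q) i) = (f x : Fin n → Q) (pihat A f i) := by
  have h : ∃ y : A, (y : Fin n → Q) i = (x : Fin n → Q) i := ⟨x, rfl⟩
  rw [sigmahat, dif_pos h]
  exact (pihat_rel A hf i h.choose x).mp h.choose_spec

lemma Wv_image {f : A → A} (hf : Feas A f) (i : Fin n) :
    Wv A (pihat A f i) = (Wv A i).image (sigmahat A f i) := by
  classical
  ext u
  rw [mem_Wv, Finset.mem_image]
  constructor
  · rintro ⟨x, rfl⟩
    obtain ⟨x', rfl⟩ := hf.1.surjective x
    exact ⟨(x' : Fin n → Q) i, (mem_Wv A).mpr ⟨x', rfl⟩, sigmahat_forced A hf i x'⟩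
  · rintro ⟨v, hv, rfl⟩
    obtain ⟨x, rfl⟩ := (mem_Wv A).mp hv
    rw [sigmahat_forced A hf i x]
    exact ⟨f x, rfl⟩

lemma card_Wv {f : A → A} (hf : Feas A f) (i : Fin n) :
    (Wv A (pihat A f i)).card = (Wv A i).card := by
  classical
  rw [Wv_image A hf i]
  apply Finset.card_image_of_injOn
  intro v hv v' hv' heq
  obtain ⟨x, rfl⟩ := (mem_Wv A).mp hv
  obtain ⟨y, rfl⟩ := (mem_Wv A).mp hv'
  rw [sigmahat_forced A hf i x, sigmahat_forced A hf i y] at heq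
  exact (pihat_rel A hf i x y).mpr heq

lemma card_Wv_compl {f : A → A} (hf : Feas A f) (i : Fin n) :
    ((Wv A i)ᶜ : Finset Q).card = ((Wv A (pihat A f i))ᶜ : Finset Q).card := by
  classical
  rw [Finset.card_compl, Finset.card_compl, card_Wv A hf i]

lemma sigmahat_id (i : Fin n) (v : Q) : sigmahat A id i v = v := by
  rw [sigmahat]
  by_cases h : ∃ x : A, (x : Fin n → Q) i = v
  · rw [dif_pos h, pihat_id]
    exact h.choose_spec
  · rw [dif_neg h, pihat_id, mmap_self]

lemma sigmahat_comp {f f' : A → A} (hf : Feas A f) (hf' : Feas A f') (i : Fin n) (v : Q) :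
    sigmahat A f (pihat A f' i) (sigmahat A f' i v) = sigmahat A (f ∘ f') i v := by
  classical
  by_cases h : ∃ x : A, (x : Fin n → Q) i = v
  · obtain ⟨x, rfl⟩ := h
    rw [sigmahat_forced A hf' i x, sigmahat_forced A hf (pihat A f' i) (f' x),
      sigmahat_forced A (feas_comp A hf hf') i x, pihat_comp A hf hf']
    rfl
  · have hv : v ∉ Wv A i := fun hc => h ((mem_Wv A).mp hc)
    have hv' : v ∈ ((Wv A i)ᶜ : Finset Q) := Finset.mem_compl.mpr hv
    have hstep1 : sigmahat A f' i v = mmap ((Wv A i)ᶜ) ((Wv A (pihat A f' i))ᶜ) v := by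
      rw [sigmahat, dif_neg h]
    set u := mmap ((Wv A i)ᶜ) ((Wv A (pihat A f' i))ᶜ) v with hu
    have humem : u ∈ ((Wv A (pihat A f' i))ᶜ : Finset Q) :=
      mmap_mem (card_Wv_compl A hf' i) hv'
    have hunotin : ¬ ∃ y : A, (y : Fin n → Q) (pihat A f' i) = u := by
      intro hc
      exact Finset.mem_compl.mp humem ((mem_Wv A).mpr hc)
    rw [hstep1, sigmahat, dif_neg hunotin, sigmahat, dif_neg h, hu,
      mmap_comp (card_Wv_compl A hf' i) (card_Wv_compl A hf (pihat A f' i)) hv',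
      pihat_comp A hf hf']

lemma sigmahat_leftinv {f f' : A → A} (hf : Feas A f) (hf' : Feas A f')
    (hf'f : f' ∘ f = id) (i : Fin n) (v : Q) :
    sigmahat A f' (pihat A f i) (sigmahat A f i v) = v := by
  rw [sigmahat_comp A hf' hf i v, hf'f, sigmahat_id]

lemma sigmahat_inj {f f' : A → A} (hf : Feas A f) (hf' : Feas A f')
    (hf'f : f' ∘ f = id) (i : Fin n) : Function.Injective (sigmahat A f i) := by
  intro v v' heq
  have h1 := sigmahat_leftinv A hf hf' hf'f i v
  have h2 := sigmahat_leftinv A hf hf' hf'f i v'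
  rw [← h1, ← h2, heq]

noncomputable def ghat (f f' : A → A) (x : Fin n → Q) : Fin n → Q :=
  fun j => sigmahat A f (pihat A f' j) (x (pihat A f' j))

lemma ghat_apply_pi {f f' : A → A} (hf : Feas A f) (hf' : Feas A f')
    (hf'f : f' ∘ f = id) (x : Fin n → Q) (i : Fin n) :
    ghat A f f' x (pihat A f i) = sigmahat A f i (x i) := by
  rw [ghat, pihat_inv A hf' hf hf'f i]

lemma ghat_extends {f f' : A → A} (hf : Feas A f) (hf' : Feas A f')
    (hff' : f ∘ f' = id) (x : A) :
    ghat A f f' (x : Fin n → Q) = (f x : Fin n → Q) := by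
  funext j
  rw [ghat, sigmahat_forced A hf (pihat A f' j) x, pihat_inv A hf hf' hff' j]

lemma ghat_comp {f1 f1' f2 f2' : A → A} (hf1 : Feas A f1) (hf1' : Feas A f1')
    (hf2 : Feas A f2) (hf2' : Feas A f2')
    (h2 : f2 ∘ f2' = id) (x : Fin n → Q) :
    ghat A f1 f1' (ghat A f2 f2' x) = ghat A (f1 ∘ f2) (f2' ∘ f1') x := by
  funext j
  show sigmahat A f1 (pihat A f1' j) (ghat A f2 f2' x (pihat A f1' j)) = _
  rw [ghat]
  have e1 : pihat A f2' (pihat A f1' j) = pihat A (f2' ∘ f1') j :=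
    pihat_comp A hf2' hf1' j
  have e2 : pihat A f2 (pihat A (f2' ∘ f1') j) = pihat A f1' j := by
    rw [← e1, pihat_inv A hf2 hf2' h2]
  rw [e1, ← e2, sigmahat_comp A hf1 hf2]
  show sigmahat A (f1 ∘ f2) (pihat A (f2' ∘ f1') j) (x (pihat A (f2' ∘ f1') j)) = _
  rw [ghat]

lemma ghat_id (x : Fin n → Q) : ghat A id id x = x := by
  funext j
  rw [ghat, pihat_id, sigmahat_id]

lemma ghat_isometry {f f' : A → A} (hf : Feas A f) (hf' : Feas A f')
    (hff' : f ∘ f' = id) (hf'f : f' ∘ f = id) (x y : Fin n → Q) :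
    hammingDist (ghat A f f' x) (ghat A f f' y) = hammingDist x y := by
  classical
  rw [hd_eq, hd_eq]
  apply Finset.card_bij (fun j _ => pihat A f' j)
  · intro j hj
    rw [mem_Δ] at hj ⊢
    intro hc
    exact hj (by rw [ghat, ghat, hc])
  · intro j hj j' hj' heq
    have := congrArg (pihat A f) heq
    rwa [pihat_inv A hf hf' hff', pihat_inv A hf hf' hff'] at this
  · intro i hi
    refine ⟨pihat A f i, ?_, pihat_inv A hf' hf hf'f i⟩
    rw [mem_Δ] at hi ⊢
    rw [ghat_apply_pi A hf hf' hf'f, ghat_apply_pi A hf hf' hf'f]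
    intro hc
    exact hi (sigmahat_inj A hf hf' hf'f i hc)

end order

end canon

end PropelinearAux

open PropelinearAux in
/-- `A ⊆ Q^n` with `0 ∈ A` is propelinear iff it carries an associative operation with
identity `0` whose left multiplications extend to isometries of the Hamming space. -/
theorem propelinear_iff_operation {Q : Type} [Fintype Q] [DecidableEq Q] {n : ℕ} (q0 : Q)
    (A : Set (Fin n → Q)) (h0 : (fun _ => q0) ∈ A) :
    (∃ G : Subgroup (Equiv.Perm (Fin n → Q)),
        (∀ g ∈ G, (∀ x y : Fin n → Q, hammingDist (g x) (g y) = hammingDist x y) ∧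
          (⇑g) '' A = A) ∧
        Nat.card G = Nat.card A ∧
        (∀ x ∈ A, ∀ y ∈ A, ∃ g ∈ G, g x = y)) ↔
      (∃ mul : A → A → A,
        (∀ a : A, ∃ g : (Fin n → Q) → (Fin n → Q),
            Function.Bijective g ∧
            (∀ x y : Fin n → Q, hammingDist (g x) (g y) = hammingDist x y) ∧
            ∀ x : A, g (x : Fin n → Q) = (mul a x : Fin n → Q)) ∧
        (∀ a : A, mul a ⟨fun _ => q0, h0⟩ = a) ∧
        (∀ a b c : A, mul (mul a b) c = mul a (mul b c))) := by
  classical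
  constructor
  · -- forward direction
    rintro ⟨G, hGiso, hGcard, hGtrans⟩
    have hmapsto : ∀ g ∈ G, ∀ x ∈ A, (g : Equiv.Perm (Fin n → Q)) x ∈ A := by
      intro g hg x hx
      have := (hGiso g hg).2
      rw [← this]
      exact ⟨x, hx, rfl⟩
    have hfinG : Finite G := inferInstance
    set Φ : G → A := fun g =>
      ⟨(g : Equiv.Perm (Fin n → Q)) (fun _ => q0), hmapsto g g.2 _ h0⟩ with hΦdef
    have hΦsurj : Function.Surjective Φ := by
      rintro ⟨a, ha⟩
      obtain ⟨g, hg, hgz⟩ := hGtrans _ h0 a ha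
      exact ⟨⟨g, hg⟩, Subtype.ext hgz⟩
    have hΦbij : Function.Bijective Φ :=
      (Nat.bijective_iff_surjective_and_card Φ).mpr ⟨hΦsurj, by rw [hGcard]⟩
    set eqv := Equiv.ofBijective Φ hΦbij with heqv
    set σ : A → G := fun a => eqv.symm a with hσ
    have hΦσ : ∀ a : A, Φ (σ a) = a := fun a => eqv.apply_symm_apply a
    have hσz : ∀ a : A, ((σ a : G) : Equiv.Perm (Fin n → Q)) (fun _ => q0) = (a : Fin n → Q) :=
      fun a => congrArg Subtype.val (hΦσ a)
    refine ⟨fun a b => ⟨((σ a : G) : Equiv.Perm (Fin n → Q)) b,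
      hmapsto _ (σ a).2 _ b.2⟩, ?_, ?_, ?_⟩
    · intro a
      exact ⟨⇑((σ a : G) : Equiv.Perm (Fin n → Q)), Equiv.bijective _,
        (hGiso _ (σ a).2).1, fun x => rfl⟩
    · intro a
      exact Subtype.ext (hσz a)
    · intro a b c
      have hkey : ∀ a b : A,
          σ ⟨((σ a : G) : Equiv.Perm (Fin n → Q)) b, hmapsto _ (σ a).2 _ b.2⟩
            = σ a * σ b := by
        intro a b
        have h1 : Φ (σ a * σ b)
            = ⟨((σ a : G) : Equiv.Perm (Fin n → Q)) b, hmapsto _ (σ a).2 _ b.2⟩ := by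
          apply Subtype.ext
          show ((σ a * σ b : G) : Equiv.Perm (Fin n → Q)) (fun _ => q0)
            = ((σ a : G) : Equiv.Perm (Fin n → Q)) b
          have hmm : ((σ a * σ b : G) : Equiv.Perm (Fin n → Q)) (fun _ => q0)
              = ((σ a : G) : Equiv.Perm (Fin n → Q))
                (((σ b : G) : Equiv.Perm (Fin n → Q)) (fun _ => q0)) := rfl
          rw [hmm, hσz b]
        have h2 : Φ (σ ⟨((σ a : G) : Equiv.Perm (Fin n → Q)) b, hmapsto _ (σ a).2 _ b.2⟩)
            = ⟨((σ a : G) : Equiv.Perm (Fin n → Q)) b, hmapsto _ (σ a).2 _ b.2⟩ := hΦσ _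
        exact hΦbij.1 (h2.trans h1.symm)
      apply Subtype.ext
      show ((σ _ : G) : Equiv.Perm (Fin n → Q)) c = ((σ a : G) : Equiv.Perm (Fin n → Q)) _
      rw [hkey a b]
      rfl
  · -- backward direction
    rintro ⟨mul, hext, hid, hassoc⟩
    letI : LinearOrder Q := LinearOrder.lift' (fun q => (Fintype.equivFin Q) q)
      (Equiv.injective _)
    set e : A := ⟨fun _ => q0, h0⟩ with hedef
    set F : A → (A → A) := fun a x => mul a x with hFdef
    have hFapp : ∀ a x, F a x = mul a x := fun _ _ => rfl
    have hinjF : ∀ a, Function.Injective (F a) := by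
      intro a x y hxy
      obtain ⟨g, hgbij, hgiso, hgext⟩ := hext a
      apply Subtype.ext
      apply hgbij.1
      rw [hgext x, hgext y]
      exact congrArg Subtype.val hxy
    have hsurjF : ∀ a, Function.Surjective (F a) :=
      fun a => Finite.injective_iff_surjective.mp (hinjF a)
    have hbijF : ∀ a, Function.Bijective (F a) := fun a => ⟨hinjF a, hsurjF a⟩
    have hide : ∀ x, mul e x = x := by
      intro x
      apply hinjF e
      rw [hFapp, hFapp]
      show mul e (mul e x) = mul e x
      rw [← hassoc e e x, hid e]
    have hinvex : ∀ a, ∃ a', mul a a' = e ∧ mul a' a = e := by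
      intro a
      obtain ⟨a', ha'⟩ := hsurjF a e
      have ha'' : mul a a' = e := ha'
      refine ⟨a', ha'', ?_⟩
      apply hinjF a
      rw [hFapp, hFapp]
      show mul a (mul a' a) = mul a e
      rw [← hassoc a a' a, ha'']
      exact (hide a).trans (hid a).symm
    set inv : A → A := fun a => (hinvex a).choose with hinvdef
    have hinv1 : ∀ a, mul a (inv a) = e := fun a => (hinvex a).choose_spec.1
    have hinv2 : ∀ a, mul (inv a) a = e := fun a => (hinvex a).choose_spec.2
    have hinv_unique : ∀ c d, mul c d = e → d = inv c := by
      intro c d hcd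
      have h1 : mul (inv c) (mul c d) = mul (inv c) e := by rw [hcd]
      rw [← hassoc (inv c) c d, hinv2 c, hide d, hid (inv c)] at h1
      exact h1
    have hFeas : ∀ a, Feas A (F a) := by
      intro a
      refine ⟨hbijF a, ?_⟩
      obtain ⟨g, hgbij, hgiso, hgext⟩ := hext a
      obtain ⟨π, hπinj, hπ⟩ := key_isometry g hgiso
      refine ⟨π, hπinj, fun i x y => ?_⟩
      have h1 := hπ (x : Fin n → Q) (y : Fin n → Q) i
      rwa [hgext x, hgext y] at h1
    have hcompF : ∀ a b, F a ∘ F b = F (mul a b) := by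
      intro a b
      funext x
      rw [hFapp]
      show mul a (mul b x) = mul (mul a b) x
      exact (hassoc a b x).symm
    have hFid : F e = id := by
      funext x
      rw [hFapp, hide]
      rfl
    have hFinv1 : ∀ a, F a ∘ F (inv a) = id := by
      intro a; rw [hcompF, hinv1, hFid]
    have hFinv2 : ∀ a, F (inv a) ∘ F a = id := by
      intro a; rw [hcompF, hinv2, hFid]
    set E : A → Equiv.Perm (Fin n → Q) := fun a =>
      { toFun := ghat A (F a) (F (inv a))
        invFun := ghat A (F (inv a)) (F a)
        left_inv := by
          intro x
          rw [show (ghat A (F (inv a)) (F a)) ((ghat A (F a) (F (inv a))) x)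
              = ghat A (F (inv a) ∘ F a) (F (inv a) ∘ F a) x from
            ghat_comp A (hFeas (inv a)) (hFeas a) (hFeas a) (hFeas (inv a)) (hFinv1 a) x,
            hFinv2 a, ghat_id]
        right_inv := by
          intro x
          rw [show (ghat A (F a) (F (inv a))) ((ghat A (F (inv a)) (F a)) x)
              = ghat A (F a ∘ F (inv a)) (F a ∘ F (inv a)) x from
            ghat_comp A (hFeas a) (hFeas (inv a)) (hFeas (inv a)) (hFeas a) (hFinv2 a) x,
            hFinv1 a, ghat_id] } with hEdef
    have hE_apply : ∀ a x, E a x = ghat A (F a) (F (inv a)) x := fun a x => rfl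
    have hE_ext : ∀ (a : A) (x : A), E a (x : Fin n → Q) = ((mul a x : A) : Fin n → Q) := by
      intro a x
      rw [hE_apply, ghat_extends A (hFeas a) (hFeas (inv a)) (hFinv1 a) x]
    have hE_iso : ∀ (a : A) (x y : Fin n → Q),
        hammingDist (E a x) (E a y) = hammingDist x y := by
      intro a x y
      rw [hE_apply, hE_apply]
      exact ghat_isometry A (hFeas a) (hFeas (inv a)) (hFinv1 a) (hFinv2 a) x y
    have hE_img : ∀ a : A, ⇑(E a) '' A = A := by
      intro a
      apply Set.eq_of_subset_of_subset
      · rintro y ⟨x, hx, rfl⟩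
        rw [show x = ((⟨x, hx⟩ : A) : Fin n → Q) from rfl, hE_ext a ⟨x, hx⟩]
        exact (mul a ⟨x, hx⟩).2
      · intro y hy
        obtain ⟨x, hx⟩ := hsurjF a ⟨y, hy⟩
        refine ⟨(x : Fin n → Q), x.2, ?_⟩
        rw [hE_ext a x]
        have hx' : mul a x = ⟨y, hy⟩ := hx
        rw [hx']
    have hmulinv : ∀ a b, mul (inv b) (inv a) = inv (mul a b) := by
      intro a b
      apply hinv_unique
      show mul (mul a b) (mul (inv b) (inv a)) = e
      rw [hassoc a b (mul (inv b) (inv a)), ← hassoc b (inv b) (inv a), hinv1 b,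
        hide (inv a), hinv1 a]
    have hE_mul : ∀ a b, E (mul a b) = E a * E b := by
      intro a b
      apply Equiv.ext
      intro x
      rw [Equiv.Perm.mul_apply, hE_apply, hE_apply, hE_apply,
        ghat_comp A (hFeas a) (hFeas (inv a)) (hFeas b) (hFeas (inv b)) (hFinv1 b) x,
        hcompF a b, hcompF (inv b) (inv a), hmulinv a b]
    have hinv_e : inv e = e := (hinv_unique e e (hid e)).symm
    have hE_one : E e = 1 := by
      apply Equiv.ext
      intro x
      rw [hE_apply, hinv_e, hFid, ghat_id]
      rfl
    refine ⟨{ carrier := Set.range E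
              mul_mem' := ?_
              one_mem' := ?_
              inv_mem' := ?_ }, ?_, ?_, ?_⟩
    · rintro g h ⟨a, rfl⟩ ⟨b, rfl⟩
      exact ⟨mul a b, hE_mul a b⟩
    · exact ⟨e, hE_one⟩
    · rintro g ⟨a, rfl⟩
      refine ⟨inv a, ?_⟩
      apply eq_inv_of_mul_eq_one_left
      rw [← hE_mul (inv a) a, hinv2 a, hE_one]
    · rintro g ⟨a, rfl⟩
      exact ⟨hE_iso a, hE_img a⟩
    · have hbij : Function.Bijective
          (fun a : A => (⟨E a, ⟨a, rfl⟩⟩ : Set.range E)) := by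
        constructor
        · intro a b hab
          have h1 : E a = E b := congrArg Subtype.val hab
          have h2 := congrArg (fun g : Equiv.Perm (Fin n → Q) => g ((e : A) : Fin n → Q)) h1
          rw [hE_ext a e, hE_ext b e, hid a, hid b] at h2
          exact Subtype.ext h2
        · rintro ⟨g, a, rfl⟩
          exact ⟨a, rfl⟩
      have hc := Nat.card_congr (Equiv.ofBijective _ hbij)
      exact hc.symm
    · intro x hx y hy
      refine ⟨E (mul ⟨y, hy⟩ (inv ⟨x, hx⟩)), ⟨_, rfl⟩, ?_⟩
      have hkey := hE_ext (mul ⟨y, hy⟩ (inv ⟨x, hx⟩)) ⟨x, hx⟩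
      rw [hassoc ⟨y, hy⟩ (inv ⟨x, hx⟩) ⟨x, hx⟩, hinv2 ⟨x, hx⟩, hid ⟨y, hy⟩] at hkey
      exact hkey
end

section
/- Every subcode of an isotopically transitive subset of Q^n is isotopically transitive. Here a subcode is the set obtained by fixing some m coordinates of elements of A to given values and restricting to the remaining n−m coordinates. -/
/-- `A ⊆ Q^I` is isotopically transitive if the group of isotopisms
(coordinatewise alphabet permutations) preserving `A` acts transitively on `A`. -/
def IsoTransitive {I Q : Type} (A : Set (I → Q)) : Prop :=
  ∀ x ∈ A, ∀ y ∈ A, ∃ τ : I → Equiv.Perm Q,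
    (∀ z, z ∈ A ↔ (fun i => τ i (z i)) ∈ A) ∧ (fun i => τ i (x i)) = y

/-- Every subcode (obtained by fixing the coordinates in `S` to the values `b`)
of an isotopically transitive set is isotopically transitive. -/
theorem subcode_isoTransitive {n : ℕ} {Q : Type} [Fintype Q] (A : Set (Fin n → Q))
    (hA : IsoTransitive A) (S : Finset (Fin n)) (b : Fin n → Q) :
    IsoTransitive {y : {i : Fin n // i ∉ S} → Q |
      (fun i : Fin n => if h : i ∈ S then b i else y ⟨i, h⟩) ∈ A} := by
  intro x hx y hy
  obtain ⟨τ, hτ, hxy⟩ := hA _ hx _ hy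
  have hfix : ∀ i (h : i ∈ S), τ i (b i) = b i := by
    intro i h
    have := congrFun hxy i
    simpa [dif_pos h] using this
  refine ⟨fun i => τ i.1, ?_, ?_⟩
  · intro z
    have key : (fun i : Fin n => τ i (if h : i ∈ S then b i else z ⟨i, h⟩)) =
        (fun i : Fin n => if h : i ∈ S then b i else τ i (z ⟨i, h⟩)) := by
      funext i
      by_cases h : i ∈ S
      · simp [dif_pos h, hfix i h]
      · simp [dif_neg h]
    have := hτ (fun i : Fin n => if h : i ∈ S then b i else z ⟨i, h⟩)
    rw [key] at this
    exact this
  · funext i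
    have := congrFun hxy i.1
    simpa [dif_neg i.2] using this
end

section
/- A loop (quasigroup with two-sided identity element) is isotopically transitive if and only if it is a G-loop, i.e., every loop isotopic to it is isomorphic to it. Isotopic transitivity means: the autotopy group of the graph M = {(x,y,f(x,y))} ⊆ Q^3 (coordinatewise permutation triples preserving M) acts transitively on M. -/
/-- `f` is a loop on `Q` with identity element `o`. -/
def IsLoop {Q : Type} (f : Q → Q → Q) (o : Q) : Prop :=
  (∀ x, Function.Bijective (f x)) ∧ (∀ y, Function.Bijective fun x => f x y) ∧
    (∀ x, f x o = x) ∧ (∀ x, f o x = x)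

/-- A finite loop is isotopically transitive (the autotopy group of its graph acts
transitively on the graph) iff it is a G-loop (every loop isotopic to it is
isomorphic to it). -/
theorem isoTransitive_iff_GLoop {Q : Type} [Fintype Q]
    (f : Q → Q → Q) (o : Q) (hf : IsLoop f o) :
    (∀ a b c d : Q, ∃ σ₁ σ₂ σ₃ : Equiv.Perm Q,
        (∀ x y, σ₃ (f x y) = f (σ₁ x) (σ₂ y)) ∧ σ₁ a = c ∧ σ₂ b = d) ↔
      (∀ (g : Q → Q → Q) (o' : Q), IsLoop g o' →
        (∃ φ ξ ψ : Equiv.Perm Q, ∀ x y, g x y = φ (f (ξ x) (ψ y))) →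
        ∃ τ : Equiv.Perm Q, ∀ x y, g (τ x) (τ y) = τ (f x y)) := by
  obtain ⟨hL, hR, hro, hlo⟩ := hf
  constructor
  · -- isotopic transitivity → G-loop
    intro htrans g o' hg hiso
    obtain ⟨φ, ξ, ψ, hgf⟩ := hiso
    obtain ⟨hgL, hgR, hgro, hglo⟩ := hg
    obtain ⟨σ₁, σ₂, σ₃, hauto, h1, h2⟩ := htrans o o (ξ o') (ψ o')
    -- basic identities from g being a loop
    have e1 : ∀ x, f (ξ x) (ψ o') = φ.symm x := by
      intro x
      have hx : φ (f (ξ x) (ψ o')) = x := by rw [← hgf]; exact hgro x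
      exact ((Equiv.symm_apply_eq φ).2 hx.symm).symm
    have e2 : ∀ y, f (ξ o') (ψ y) = φ.symm y := by
      intro y
      have hy : φ (f (ξ o') (ψ y)) = y := by rw [← hgf]; exact hglo y
      exact ((Equiv.symm_apply_eq φ).2 hy.symm).symm
    refine ⟨σ₃.trans φ, ?_⟩
    intro x y
    simp only [Equiv.trans_apply]
    rw [hgf]
    congr 1
    -- key identifications
    have k1 : ξ (φ (σ₃ x)) = σ₁ x := by
      apply (hR (ψ o')).1
      show f (ξ (φ (σ₃ x))) (ψ o') = f (σ₁ x) (ψ o')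
      rw [e1, Equiv.symm_apply_apply]
      have := hauto x o
      rw [hro, h2] at this
      exact this
    have k2 : ψ (φ (σ₃ y)) = σ₂ y := by
      apply (hL (ξ o')).1
      show f (ξ o') (ψ (φ (σ₃ y))) = f (ξ o') (σ₂ y)
      rw [e2, Equiv.symm_apply_apply]
      have := hauto o y
      rw [hlo, h1] at this
      exact this
    rw [k1, k2, ← hauto]
  · -- G-loop → isotopic transitivity
    intro hG a b c d
    have key : ∀ p q : Q, ∃ σ₁ σ₂ σ₃ : Equiv.Perm Q,
        (∀ x y, σ₃ (f x y) = f (σ₁ x) (σ₂ y)) ∧ σ₁ o = p ∧ σ₂ o = q := by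
      intro p q
      let Rq : Equiv.Perm Q := Equiv.ofBijective _ (hR q)
      let Lp : Equiv.Perm Q := Equiv.ofBijective _ (hL p)
      have hRq : ∀ x, Rq x = f x q := fun _ => rfl
      have hLp : ∀ y, Lp y = f p y := fun _ => rfl
      set g : Q → Q → Q := fun x y => f (Rq.symm x) (Lp.symm y) with hgdef
      have hLpq : Lp.symm (f p q) = q := by
        apply Lp.injective; rw [Equiv.apply_symm_apply, hLp]
      have hRpq : Rq.symm (f p q) = p := by
        apply Rq.injective; rw [Equiv.apply_symm_apply, hRq]
      have hgloop : IsLoop g (f p q) := by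
        refine ⟨?_, ?_, ?_, ?_⟩
        · intro x
          have hcomp : (g x) = (f (Rq.symm x)) ∘ Lp.symm := rfl
          rw [hcomp]; exact (hL _).comp Lp.symm.bijective
        · intro y
          have hcomp : (fun x => g x y) = (fun x => f x (Lp.symm y)) ∘ Rq.symm := rfl
          rw [hcomp]; exact (hR _).comp Rq.symm.bijective
        · intro x
          show f (Rq.symm x) (Lp.symm (f p q)) = x
          rw [hLpq]
          have := Rq.apply_symm_apply x
          rwa [hRq] at this
        · intro y
          show f (Rq.symm (f p q)) (Lp.symm y) = y
          rw [hRpq]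
          have := Lp.apply_symm_apply y
          rwa [hLp] at this
      obtain ⟨τ, hτ⟩ := hG g (f p q) hgloop ⟨Equiv.refl Q, Rq.symm, Lp.symm, fun x y => rfl⟩
      have hτo : τ o = f p q := by
        apply (hgloop.1 (τ o)).1
        show g (τ o) (τ o) = g (τ o) (f p q)
        rw [hgloop.2.2.1 (τ o), hτ o o, hro]
      refine ⟨τ.trans Rq.symm, τ.trans Lp.symm, τ, ?_, ?_, ?_⟩
      · intro x y
        rw [← hτ]
        rfl
      · show Rq.symm (τ o) = p
        rw [hτo, hRpq]
      · show Lp.symm (τ o) = q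
        rw [hτo, hLpq]
    obtain ⟨α, β, γ, hγ, hα, hβ⟩ := key a b
    obtain ⟨α', β', γ', hγ', hα', hβ'⟩ := key c d
    refine ⟨α.symm.trans α', β.symm.trans β', γ.symm.trans γ', ?_, ?_, ?_⟩
    · intro x y
      simp only [Equiv.trans_apply]
      have hsymm : γ.symm (f x y) = f (α.symm x) (β.symm y) := by
        apply γ.injective
        rw [Equiv.apply_symm_apply, hγ, Equiv.apply_symm_apply, Equiv.apply_symm_apply]
      rw [hsymm, hγ']
    · simp only [Equiv.trans_apply]
      have : α.symm a = o := by rw [← hα, Equiv.symm_apply_apply]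
      rw [this, hα']
    · simp only [Equiv.trans_apply]
      have : β.symm b = o := by rw [← hβ, Equiv.symm_apply_apply]
      rw [this, hβ']
end

section
/- For every odd prime p, the operation on Z_p × Z_2 given by (x,ζ) * (y,ξ) = ((-1)^ξ x + y + ζξ mod p, ζ ⊕ ξ) defines a loop (a binary quasigroup with identity element (0,0)). -/
/-- The operation of the loop `C_p` on `Z_p × Z_2`:
`(x,ζ) * (y,ξ) = ((-1)^ξ x + y + ζξ, ζ ⊕ ξ)`. -/
def copOp (p : ℕ) (a b : ZMod p × ZMod 2) : ZMod p × ZMod 2 :=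
  ((-1) ^ b.2.val * a.1 + b.1 + ((a.2.val * b.2.val : ℕ) : ZMod p), a.2 + b.2)

/-- For every odd prime `p`, the operation of `C_p` defines a loop with identity `(0,0)`. -/
theorem copOp_isLoop (p : ℕ) (hp : p.Prime) (hodd : Odd p) :
    (∀ a, Function.Bijective (copOp p a)) ∧
    (∀ b, Function.Bijective fun a => copOp p a b) ∧
    (∀ a, copOp p a (0, 0) = a) ∧ (∀ a, copOp p (0, 0) a = a) := by
  haveI : Fact p.Prime := ⟨hp⟩
  have hne : ∀ k : ℕ, ((-1 : ZMod p)) ^ k ≠ 0 := by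
    intro k
    exact pow_ne_zero k (by
      simpa using (neg_ne_zero.mpr (one_ne_zero : (1 : ZMod p) ≠ 0)))
  refine ⟨?_, ?_, ?_, ?_⟩
  · intro a
    refine Finite.injective_iff_bijective.mp ?_
    intro b b' h
    have h2 : a.2 + b.2 = a.2 + b'.2 := congrArg Prod.snd h
    have hb2 : b.2 = b'.2 := by
      exact add_left_cancel h2
    have h1 := congrArg Prod.fst h
    simp only [copOp, hb2] at h1
    have hb1 : b.1 = b'.1 := by
      exact add_left_cancel (add_right_cancel h1)
    exact Prod.ext hb1 hb2
  · intro b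
    refine Finite.injective_iff_bijective.mp ?_
    intro a a' h
    have h2 : a.2 + b.2 = a'.2 + b.2 := congrArg Prod.snd h
    have ha2 : a.2 = a'.2 := add_right_cancel h2
    have h1 := congrArg Prod.fst h
    simp only [copOp, ha2] at h1
    have ha1 : a.1 = a'.1 := by
      have h1' : (-1 : ZMod p) ^ b.2.val * a.1 = (-1) ^ b.2.val * a'.1 :=
        add_right_cancel (add_right_cancel h1)
      exact mul_left_cancel₀ (hne _) h1'
    exact Prod.ext ha1 ha2
  · intro a
    simp [copOp]
  · intro a
    simp [copOp]
end

section
/- For every odd prime p, the loop C_p on Z_p × Z_2 defined by (x,ζ) * (y,ξ) = ((-1)^ξ x + y + ζξ, ζ ⊕ ξ) is isotopically transitive: the autotopy group of its graph M = {(a,b,c) : a*b = c} acts transitively on M. -/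
def affPerm (p : ℕ) (ε r : ZMod 2) (β : ZMod 2 → ZMod p) :
    Equiv.Perm (ZMod p × ZMod 2) where
  toFun x := ((-1) ^ ε.val * x.1 + β x.2, x.2 + r)
  invFun x := ((-1) ^ ε.val * (x.1 - β (x.2 - r)), x.2 - r)
  left_inv := by
    rintro ⟨x, s⟩
    have h : ((-1 : ZMod p) ^ ε.val) * (-1) ^ ε.val = 1 := by
      rw [← mul_pow]; norm_num
    simp only [add_sub_cancel_right, Prod.mk.injEq, and_true]
    linear_combination x * h
  right_inv := by
    rintro ⟨x, s⟩
    have h : ((-1 : ZMod p) ^ ε.val) * (-1) ^ ε.val = 1 := by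
      rw [← mul_pow]; norm_num
    simp only [sub_add_cancel, Prod.mk.injEq, and_true]
    linear_combination (x - β (s - r)) * h

/-- For every odd prime `p`, the loop `C_p` is isotopically transitive: the autotopy
group of its graph `M = {(a,b,a*b)}` acts transitively on `M`. -/
theorem copOp_isoTransitive (p : ℕ) (hp : p.Prime) (hodd : Odd p) :
    ∀ a b c d : ZMod p × ZMod 2,
      ∃ σ₁ σ₂ σ₃ : Equiv.Perm (ZMod p × ZMod 2),
        (∀ x y, σ₃ (copOp p x y) = copOp p (σ₁ x) (σ₂ y)) ∧ σ₁ a = c ∧ σ₂ b = d := by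
  have h2 : ∀ z : ZMod 2, z = 0 ∨ z = 1 := by decide
  rintro ⟨a1, a2⟩ ⟨b1, b2⟩ ⟨c1, c2⟩ ⟨d1, d2⟩
  obtain ⟨r, hr⟩ : ∃ r : ZMod 2, c2 - a2 = r := ⟨_, rfl⟩
  obtain ⟨q, hq⟩ : ∃ q : ZMod 2, d2 - b2 = q := ⟨_, rfl⟩
  obtain ⟨B, hB⟩ : ∃ B : ZMod p, c1 - (-1) ^ (r + q).val * a1 = B := ⟨_, rfl⟩
  obtain ⟨D, hD⟩ : ∃ D : ZMod p,
      d1 - (-1) ^ r.val * b1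
        - (b2.val : ZMod p) *
          ((-1) ^ q.val * (2 * B) + (q.val : ZMod p) - (r.val : ZMod p)) = D := ⟨_, rfl⟩
  refine ⟨affPerm p (r + q) r (fun _ => B),
      affPerm p r q (fun t =>
        D + (t.val : ZMod p) *
          ((-1) ^ q.val * (2 * B) + (q.val : ZMod p) - (r.val : ZMod p))),
      affPerm p r (r + q) (fun u =>
        D + (-1) ^ q.val * B + ((q.val * (r + u).val : ℕ) : ZMod p)), ?_, ?_, ?_⟩
  · rintro ⟨x, s⟩ ⟨y, t⟩
    rcases h2 r with rfl | rfl <;> rcases h2 q with rfl | rfl <;>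
      rcases h2 s with rfl | rfl <;> rcases h2 t with rfl | rfl <;>
        · simp only [affPerm, copOp, Equiv.coe_fn_mk, Prod.ext_iff]
          refine ⟨?_, by decide⟩
          simp only [show ((1 : ZMod 2) + 1) = 0 from rfl,
            show ((0 : ZMod 2) + 1) = 1 from rfl, show ((1 : ZMod 2) + 0) = 1 from rfl,
            show ((0 : ZMod 2) + 0) = 0 from rfl, show (0 : ZMod 2).val = 0 from rfl,
            show (1 : ZMod 2).val = 1 from rfl, pow_zero, pow_one, Nat.cast_zero,
            Nat.cast_one, Nat.mul_zero, Nat.zero_mul, Nat.mul_one, Nat.one_mul]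
          ring
  · simp only [affPerm, Equiv.coe_fn_mk, Prod.mk.injEq]
    exact ⟨by linear_combination -hB, by linear_combination -hr⟩
  · simp only [affPerm, Equiv.coe_fn_mk, Prod.mk.injEq]
    exact ⟨by linear_combination -hD, by linear_combination -hq⟩
end

section
/- Let M ⊆ Q^n be an isotopically transitive MDS code with distance 2 containing 0, and let G be a group of autotopisms of M acting transitively on M such that for all τ, π ∈ G, τ(0) = π(0) implies τ_1 = π_1 (equal first-coordinate permutations). Then G acts regularly on M (in particular |G| = |M|), so M is topolinear. -/
/-!
Fix the constant word `c`. Because `M` has minimum distance `2` and `|M| = |Q|^n`, deleting the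
first coordinate is a bijection from `M` onto `Q^n`. Hence an autotopism `σ` fixing `c` with
`σ₀ = id` is the identity: for every coordinate `j ≥ 1` and symbol `a`, the codeword agreeing with
`c` except for `a` in position `j` is mapped to a codeword that can differ from it only in position
`j`, so it is fixed, and `σ_j a = a`. The hypothesis on first coordinates says precisely that
every element of the stabilizer of `c` has `σ₀ = id`, so that stabilizer is trivial. A transitive
action with one trivial point stabilizer has all point stabilizers trivial, so it is regular, and
orbit–stabilizer gives `|G| = |M|`.
-/

namespace MulAction

variable {G X : Type*} [Group G] [MulAction G X] {c x : X}

theorem stabilizer_eq_bot_of_mem_orbit (hc : stabilizer G c = ⊥) (hx : x ∈ orbit G c) :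
    stabilizer G x = ⊥ := by
  obtain ⟨g, rfl⟩ := hx
  rw [stabilizer_smul_eq_stabilizer_map_conj, hc, Subgroup.map_bot]

theorem eq_of_smul_eq_smul_of_stabilizer_eq_bot (hx : stabilizer G x = ⊥) {g h : G}
    (hgh : g • x = h • x) : g = h := by
  have hmem : h⁻¹ * g ∈ stabilizer G x := by
    rw [mem_stabilizer_iff, mul_smul, inv_smul_eq_iff, hgh]
  rw [hx, Subgroup.mem_bot, inv_mul_eq_one] at hmem
  exact hmem.symm

theorem natCard_eq_card_orbit_of_stabilizer_eq_bot (hc : stabilizer G c = ⊥) :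
    Nat.card G = Nat.card (orbit G c) := by
  rw [← Subgroup.index_bot, ← hc, index_stabilizer, Nat.card_coe_set_eq]

end MulAction

section DistanceTwo

variable {ι Q : Type*} [Fintype ι] [DecidableEq Q] {M : Set (ι → Q)}

theorem eq_of_forall_ne_apply_eq (hdist : ∀ x ∈ M, ∀ y ∈ M, x ≠ y → 2 ≤ hammingDist x y)
    {x y : ι → Q} (hx : x ∈ M) (hy : y ∈ M) (i₀ : ι) (h : ∀ i ≠ i₀, x i = y i) : x = y := by
  by_contra hne
  have hle : hammingDist x y ≤ 1 := by
    refine Finset.card_le_one.2 fun i hi j hj => ?_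
    simp only [Finset.mem_filter, Finset.mem_univ, true_and] at hi hj
    exact (not_imp_comm.1 (h i) hi).trans (not_imp_comm.1 (h j) hj).symm
  have := hdist x hx y hy hne
  omega

end DistanceTwo

section MDS

variable {Q : Type*} [Fintype Q] [DecidableEq Q] {n : ℕ} {M : Set (Fin (n + 1) → Q)}

theorem exists_mem_tail_eq (hcard : Nat.card M = Fintype.card Q ^ n)
    (hdist : ∀ x ∈ M, ∀ y ∈ M, x ≠ y → 2 ≤ hammingDist x y) (v : Fin n → Q) :
    ∃ z ∈ M, Fin.tail z = v := by
  let tail : M → (Fin n → Q) := fun z => Fin.tail z.1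
  have htail : Function.Injective tail := fun z w hzw =>
    Subtype.ext <| eq_of_forall_ne_apply_eq hdist z.2 w.2 0 fun i hi => by
      obtain ⟨j, rfl⟩ := Fin.exists_succ_eq.2 hi
      exact congrFun hzw j
  have hcard' : Nat.card M = Nat.card (Fin n → Q) := by simp [hcard]
  obtain ⟨z, hz⟩ := ((Nat.bijective_iff_injective_and_card tail).2 ⟨htail, hcard'⟩).2 v
  exact ⟨z.1, z.2, hz⟩

theorem eq_one_of_smul_eq_self_of_apply_zero_eq_one (hcard : Nat.card M = Fintype.card Q ^ n)
    (hdist : ∀ x ∈ M, ∀ y ∈ M, x ≠ y → 2 ≤ hammingDist x y) {σ : Fin (n + 1) → Equiv.Perm Q}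
    (hσ : ∀ z ∈ M, σ • z ∈ M) {c : Fin (n + 1) → Q} (hfix : σ • c = c) (hσ₀ : σ 0 = 1) :
    σ = 1 := by
  funext i
  refine Fin.cases hσ₀ (fun j => Equiv.ext fun a => ?_) i
  obtain ⟨z, hz, hzc⟩ := exists_mem_tail_eq hcard hdist (Function.update (Fin.tail c) j a)
  have hσz : σ • z = z := by
    refine eq_of_forall_ne_apply_eq hdist (hσ z hz) hz j.succ fun i hi => ?_
    induction i using Fin.cases with
    | zero => simp [hσ₀]
    | succ k =>
      have hkj : k ≠ j := fun h => hi (congrArg Fin.succ h)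
      have hk : z k.succ = c k.succ := by
        simpa [Fin.tail, Function.update_of_ne hkj] using congrFun hzc k
      simpa [hk] using congrFun hfix k.succ
  have hza : z j.succ = a := by simpa [Fin.tail] using congrFun hzc j
  simpa [hza] using congrFun hσz j.succ

end MDS

/-- If `M` is an isotopically transitive distance-2 MDS code containing `0` and `G` is a
transitive group of autotopisms of `M` in which the first-coordinate permutation of an
element is determined by the image of `0`, then `G` acts regularly on `M`
(so `M` is topolinear). -/
theorem transitive_autotopism_group_regular {Q : Type} [Fintype Q] [DecidableEq Q]
    (q0 : Q) {n : ℕ} (M : Set (Fin (n + 1) → Q))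
    (hcard : Nat.card M = Fintype.card Q ^ n)
    (hdist : ∀ x ∈ M, ∀ y ∈ M, x ≠ y → 2 ≤ hammingDist x y)
    (h0 : (fun _ => q0) ∈ M)
    (G : Subgroup (Fin (n + 1) → Equiv.Perm Q))
    (hpres : ∀ τ ∈ G, ∀ z, z ∈ M ↔ (fun i => τ i (z i)) ∈ M)
    (htrans : ∀ x ∈ M, ∀ y ∈ M, ∃ τ ∈ G, (fun i => τ i (x i)) = y)
    (hfirst : ∀ τ ∈ G, ∀ π ∈ G,
      (fun i => τ i q0) = (fun i => π i q0) → τ 0 = π 0) :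
    (∀ x ∈ M, ∀ y ∈ M,
      ∃! τ : G, (fun i => (τ : Fin (n + 1) → Equiv.Perm Q) i (x i)) = y) ∧
    Nat.card G = Nat.card M := by
  set c : Fin (n + 1) → Q := fun _ => q0
  have horbit : MulAction.orbit G c = M := by
    ext y
    refine ⟨fun ⟨τ, hτ⟩ => hτ ▸ (hpres τ τ.2 c).1 h0, fun hy => ?_⟩
    obtain ⟨τ, hτ, hτc⟩ := htrans c h0 y hy
    exact ⟨⟨τ, hτ⟩, hτc⟩
  have hstab : MulAction.stabilizer G c = ⊥ := by
    refine (Subgroup.eq_bot_iff_forall _).2 fun σ hσ => Subtype.ext ?_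
    exact eq_one_of_smul_eq_self_of_apply_zero_eq_one hcard hdist
      (fun z hz => (hpres σ σ.2 z).1 hz) hσ (hfirst σ σ.2 1 G.one_mem hσ)
  refine ⟨fun x hx y hy => ?_, horbit ▸ MulAction.natCard_eq_card_orbit_of_stabilizer_eq_bot hstab⟩
  obtain ⟨τ, hτ, rfl⟩ := htrans x hx y hy
  have hx' := MulAction.stabilizer_eq_bot_of_mem_orbit hstab (horbit ▸ hx)
  exact ⟨⟨τ, hτ⟩, rfl, fun π hπ => MulAction.eq_of_smul_eq_smul_of_stabilizer_eq_bot hx' hπ⟩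
end

section
/- Let Q be a finite group with identity 0 (written multiplicatively as ·). Then the MDS code M = {x ∈ Q^n : x_1 · x_2 ⋯ x_n = 0} is propelinear: the operation x * y = (x_1 y_1, y_1^{-1} x_2 y_1 y_2, …, y_{n-1}^{-1} ⋯ y_1^{-1} x_n y_1 ⋯ y_n) makes M a group whose left translations extend to isometries (in fact isotopisms) of Q^n, and * has identity the all-0 tuple. -/
/-- For a finite group `Q`, the MDS code `M = {x : x_1 ⋯ x_n = 1}` is propelinear:
the operation `(x*y)_k = (y_1⋯y_{k-1})⁻¹ x_k (y_1⋯y_k)` makes `M` a group with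
identity the constant-identity tuple, and the translations by elements of `M`
extend to isotopisms (in particular isometries) of `Q^n`. -/
theorem iterated_group_propelinear {Q : Type} [Fintype Q] [DecidableEq Q] [Group Q]
    {n : ℕ} (M : Set (Fin n → Q)) (hM : M = {x : Fin n → Q | (List.ofFn x).prod = 1})
    (mul : (Fin n → Q) → (Fin n → Q) → (Fin n → Q))
    (hmul : ∀ x y, mul x y = fun k : Fin n =>
      (((List.ofFn y).take k.val).prod)⁻¹ * x k * ((List.ofFn y).take (k.val + 1)).prod) :
    (∀ x ∈ M, ∀ y ∈ M, mul x y ∈ M) ∧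
    (∀ x, mul x (fun _ => 1) = x) ∧
    (∀ x, mul (fun _ => 1) x = x) ∧
    (∀ x y z, mul (mul x y) z = mul x (mul y z)) ∧
    (∀ x ∈ M, ∃ y ∈ M, mul x y = (fun _ => 1) ∧ mul y x = (fun _ => 1)) ∧
    (∀ a ∈ M, ∃ τ : Fin n → Equiv.Perm Q, ∀ x ∈ M, (fun i => τ i (x i)) = mul x a) := by
  subst hM
  -- step lemma for prefix products
  have step : ∀ (w : Fin n → Q) (k : Fin n),
      ((List.ofFn w).take (k.val + 1)).prod
        = ((List.ofFn w).take k.val).prod * w k := by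
    intro w k
    have hk : k.val < (List.ofFn w).length := by simp [k.isLt]
    rw [List.prod_take_succ _ _ hk]
    simp
  -- key telescoping lemma for prefix products of `mul x y`
  have key : ∀ (x y : Fin n → Q) (k : ℕ), k ≤ n →
      ((List.ofFn (mul x y)).take k).prod
        = ((List.ofFn x).take k).prod * ((List.ofFn y).take k).prod := by
    intro x y k hk
    induction k with
    | zero => simp
    | succ k ih =>
      have hk' : k < n := hk
      rw [step (mul x y) ⟨k, hk'⟩, step x ⟨k, hk'⟩, step y ⟨k, hk'⟩,
        ih (le_of_lt hk'), hmul]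
      simp only
      rw [step y ⟨k, hk'⟩]
      group
  have whole : ∀ w : Fin n → Q, ((List.ofFn w).take n).prod = (List.ofFn w).prod := by
    intro w
    rw [List.take_of_length_le (by simp)]
  have prodmul : ∀ x y : Fin n → Q,
      (List.ofFn (mul x y)).prod = (List.ofFn x).prod * (List.ofFn y).prod := by
    intro x y
    rw [← whole (mul x y), ← whole x, ← whole y, key x y n le_rfl]
  refine ⟨?_, ?_, ?_, ?_, ?_, ?_⟩
  · intro x hx y hy
    simp only [Set.mem_setOf_eq] at *
    rw [prodmul, hx, hy, one_mul]
  · intro x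
    funext k
    rw [hmul]
    simp
  · intro x
    funext k
    rw [hmul]
    simp only
    rw [step x k]
    group
  · intro x y z
    funext k
    rw [hmul (mul x y) z, hmul x (mul y z), hmul x y]
    simp only
    rw [key y z k.val (le_of_lt k.isLt), key y z (k.val + 1) k.isLt]
    group
  · intro x hx
    simp only [Set.mem_setOf_eq] at hx
    set A : ℕ → Q := fun k => ((List.ofFn x).take k).prod with hA
    set y : Fin n → Q := fun k => A k.val * (x k)⁻¹ * (A k.val)⁻¹ with hy
    have hstepA : ∀ k : Fin n, A (k.val + 1) = A k.val * x k := by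
      intro k
      rw [hA]
      exact step x k
    have hB : ∀ k : ℕ, k ≤ n → ((List.ofFn y).take k).prod = (A k)⁻¹ := by
      intro k hk
      induction k with
      | zero => simp [hA]
      | succ k ih =>
        have hk' : k < n := hk
        rw [step y ⟨k, hk'⟩, ih hk'.le, hy]
        simp only
        rw [hstepA ⟨k, hk'⟩]
        group
    have hAn : A n = 1 := by rw [hA]; simpa [whole x] using hx
    refine ⟨y, ?_, ?_, ?_⟩
    · simp only [Set.mem_setOf_eq]
      rw [← whole y, hB n le_rfl, hAn, inv_one]
    · funext k
      rw [hmul]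
      simp only
      rw [hB k.val (le_of_lt k.isLt), hB (k.val + 1) k.isLt, hstepA k]
      group
    · funext k
      rw [hmul]
      simp only
      show (A k.val)⁻¹ * y k * A (k.val + 1) = 1
      rw [hstepA k, hy]
      simp only
      group
  · intro a ha
    refine ⟨fun i => (Equiv.mulLeft (((List.ofFn a).take i.val).prod)⁻¹).trans
      (Equiv.mulRight (((List.ofFn a).take (i.val + 1)).prod)), ?_⟩
    intro x hx
    funext i
    rw [hmul]
    simp [mul_assoc]
end

section
/- Let q = p^k with p prime, F = GF(q), and let r(x_1,…,x_n) = Σ_{i,j} α_{ij} x_i x_j + Σ_i β_i(x_i) where α_{ij} ∈ F and β_i : F → F are arbitrary functions. Then M = {((x_1,y_1),…,(x_n,y_n)) ∈ (F×F)^n : Σ x_i = 0 and Σ y_i + r(x_1,…,x_n) = 0} is an MDS code with distance 2 in the alphabet F × F of size q²; i.e., |M| = (q²)^{n-1} and any two distinct elements of M differ in at least 2 coordinates (coordinates being pairs (x_i, y_i)). -/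
/-- Over `F = GF(p^k)`, the set
`M = {((x_i,y_i))_i : Σ x_i = 0, Σ y_i + r(x) = 0}` with
`r(x) = Σ α_{ij} x_i x_j + Σ β_i(x_i)` is a distance-2 MDS code over the
alphabet `F × F`. -/
theorem quadratic_code_is_MDS {p k n : ℕ} (hp : p.Prime)
    {F : Type} [Field F] [Fintype F] [DecidableEq F]
    (hF : Fintype.card F = p ^ k)
    (α : Fin n → Fin n → F) (β : Fin n → F → F)
    (M : Set (Fin n → F × F))
    (hM : M = {z : Fin n → F × F |
      (∑ i, (z i).1) = 0 ∧
      (∑ i, (z i).2) +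
        ((∑ i, ∑ j, α i j * (z i).1 * (z j).1) + ∑ i, β i (z i).1) = 0}) :
    Nat.card M = Fintype.card (F × F) ^ (n - 1) ∧
    ∀ x ∈ M, ∀ y ∈ M, x ≠ y → 2 ≤ hammingDist x y := by
  subst hM
  constructor
  · -- cardinality
    cases n with
    | zero =>
      simp only [Nat.zero_sub, pow_zero]
      have : {z : Fin 0 → F × F |
          (∑ i, (z i).1) = 0 ∧
          (∑ i, (z i).2) +
            ((∑ i, ∑ j, α i j * (z i).1 * (z j).1) + ∑ i, β i (z i).1) = 0}
          = Set.univ := by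
        ext z
        simp
      rw [this]
      simp [Nat.card_eq_fintype_card]
    | succ m =>
      set S := {z : Fin (m+1) → F × F |
          (∑ i, (z i).1) = 0 ∧
          (∑ i, (z i).2) +
            ((∑ i, ∑ j, α i j * (z i).1 * (z j).1) + ∑ i, β i (z i).1) = 0} with hS
      -- build equivalence with Fin m → F × F
      let A : (Fin m → F × F) → F := fun w => -∑ i, (w i).1
      let xs : (Fin m → F × F) → Fin (m+1) → F :=
        fun w => Fin.snoc (fun i => (w i).1) (A w)
      let B : (Fin m → F × F) → F := fun w =>
        -∑ i, (w i).2 - ((∑ i, ∑ j, α i j * xs w i * xs w j) + ∑ i, β i (xs w i))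
      let φ : (Fin m → F × F) → Fin (m+1) → F × F :=
        fun w => Fin.snoc w (A w, B w)
      have hfst : ∀ w i, (φ w i).1 = xs w i := by
        intro w i
        refine Fin.lastCases ?_ ?_ i
        · simp [φ, xs]
        · intro j; simp [φ, xs]
      have hmem : ∀ w, φ w ∈ S := by
        intro w
        constructor
        · simp only [hfst]
          simp [xs, Fin.sum_univ_castSucc, A]
        · simp only [hfst]
          rw [Fin.sum_univ_castSucc]
          simp only [φ, Fin.snoc_last, Fin.snoc_castSucc]
          simp only [B]
          ring
      have e : (Fin m → F × F) ≃ S := {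
        toFun := fun w => ⟨φ w, hmem w⟩
        invFun := fun z i => z.1 i.castSucc
        left_inv := by
          intro w
          funext i
          simp [φ]
        right_inv := by
          rintro ⟨z, hz1, hz2⟩
          ext i : 2
          simp only
          refine Fin.lastCases ?_ ?_ i
          · -- last coordinate
            have hx : xs (fun i => z i.castSucc) = fun i => (z i).1 := by
              funext i
              refine Fin.lastCases ?_ ?_ i
              · simp only [xs, Fin.snoc_last, A]
                rw [Fin.sum_univ_castSucc] at hz1
                linear_combination -hz1
              · intro j; simp [xs]
            have hA : A (fun i => z i.castSucc) = (z (Fin.last m)).1 := by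
              have := congrFun hx (Fin.last m)
              simpa [xs] using this
            have hB : B (fun i => z i.castSucc) = (z (Fin.last m)).2 := by
              simp only [B, hx, hA]
              rw [Fin.sum_univ_castSucc] at hz2
              linear_combination -hz2
            simp only [φ, Fin.snoc_last]
            rw [hA, hB]
          · intro j
            simp [φ]
      }
      rw [Nat.card_congr e.symm]
      simp [Nat.card_eq_fintype_card]
  · -- distance
    rintro x ⟨hx1, hx2⟩ y ⟨hy1, hy2⟩ hxy
    by_contra h
    push_neg at h
    have h1 : hammingDist x y = 1 := by
      have := hammingDist_pos.mpr hxy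
      omega
    rw [hammingDist, Finset.card_eq_one] at h1
    obtain ⟨i₀, hi₀⟩ := h1
    have hmem0 : x i₀ ≠ y i₀ := by
      have : i₀ ∈ ({i₀} : Finset (Fin n)) := Finset.mem_singleton_self i₀
      rw [← hi₀, Finset.mem_filter] at this
      exact this.2
    have hagree : ∀ j, j ≠ i₀ → x j = y j := by
      intro j hj
      by_contra hne
      have : j ∈ ({i₀} : Finset (Fin n)) := by
        rw [← hi₀, Finset.mem_filter]
        exact ⟨Finset.mem_univ _, hne⟩
      exact hj (Finset.mem_singleton.mp this)
    have hfst : ∀ i, (x i).1 = (y i).1 := by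
      have hsum : ∑ i, ((x i).1 - (y i).1) = 0 := by
        rw [Finset.sum_sub_distrib, hx1, hy1, sub_zero]
      have hone : ∑ i, ((x i).1 - (y i).1) = (x i₀).1 - (y i₀).1 :=
        Finset.sum_eq_single i₀
          (fun b _ hb => by rw [hagree b hb]; ring)
          (fun h => absurd (Finset.mem_univ i₀) h)
      intro i
      rcases eq_or_ne i i₀ with rfl | hi
      · have := hone ▸ hsum
        exact sub_eq_zero.mp this
      · rw [hagree i hi]
    have hr : ((∑ i, ∑ j, α i j * (x i).1 * (x j).1) + ∑ i, β i (x i).1)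
        = ((∑ i, ∑ j, α i j * (y i).1 * (y j).1) + ∑ i, β i (y i).1) := by
      simp only [hfst]
    have hsnd : (x i₀).2 = (y i₀).2 := by
      have hsum : ∑ i, ((x i).2 - (y i).2) = 0 := by
        rw [Finset.sum_sub_distrib]
        have h2 := hx2
        rw [hr] at h2
        linear_combination h2 - hy2
      have hone : ∑ i, ((x i).2 - (y i).2) = (x i₀).2 - (y i₀).2 :=
        Finset.sum_eq_single i₀
          (fun b _ hb => by rw [hagree b hb]; ring)
          (fun h => absurd (Finset.mem_univ i₀) h)
      have := hone ▸ hsum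
      exact sub_eq_zero.mp this
    exact hmem0 (Prod.ext (hfst i₀) hsnd)
end

section
/- With F = GF(q), α_{ij} ∈ F, β_i : F → F with β_i(0) = 0, r(x) = Σ α_{ij}x_i x_j + Σ β_i(x_i), and M = {((x_i,y_i))_i : Σ x_i = 0, Σ y_i + r(x) = 0}: for any ((a_i,b_i))_i ∈ M, the coordinatewise map sending (x_i, y_i) to (x_i − a_i, y_i + x_i Σ_j α_{ij} a_j + x_i Σ_j α_{ji} a_j − β_i(x_i − a_i) + β_i(x_i) − Σ_j α_{ij} a_j a_i) is an autotopism of M mapping ((a_i,b_i))_i to an element of M whose x-components are all 0. -/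
/-!
Writing `x` for the `x`-part of a word and `a` for that of the fixed codeword, the map shifts
`x ↦ x - a`, so it preserves `Σ xᵢ = 0` because `Σ aᵢ = 0`. Expanding the quadratic form at
`x - a` produces the cross terms `xᵢ Σⱼ αᵢⱼ aⱼ`, `xᵢ Σⱼ αⱼᵢ aⱼ` and the constant `Σ αᵢⱼ aᵢ aⱼ`, and
`β` is evaluated at `xᵢ - aᵢ` instead of `xᵢ`; the correction added to the `y`-part cancels exactly
these, so the left side of the second check equation is invariant. Each coordinate map is a shear
`(x, y) ↦ (x - c, y + f x)`, hence bijective.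
-/

open Finset

theorem Prod.bijective_shear {R : Type*} [AddCommGroup R] (c : R) (f : R → R) :
    Function.Bijective fun w : R × R => (w.1 - c, w.2 + f w.1) :=
  Function.bijective_iff_has_inverse.mpr
    ⟨fun w => (w.1 + c, w.2 - f (w.1 + c)),
      fun w => by simp, fun w => by simp⟩

section QuadraticCode

variable {ι R : Type*} [Fintype ι] [CommRing R] (α : ι → ι → R) (β : ι → R → R)

theorem quadratic_sub (x a : ι → R) :
    ∑ i, ∑ j, α i j * (x i - a i) * (x j - a j) =
      ∑ i, ∑ j, α i j * x i * x j
        - ∑ i, x i * ((∑ j, α i j * a j) + ∑ j, α j i * a j)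
        + ∑ i, ∑ j, α i j * a j * a i := by
  simp only [mul_sub, sub_mul, mul_add, sum_sub_distrib, sum_add_distrib, mul_sum]
  rw [sum_comm (f := fun i j => x i * (α j i * a j))]
  simp only [mul_comm, mul_left_comm]
  ring

/-- The left-hand side of the second check equation of the code. -/
def quadCheck (z : ι → R × R) : R :=
  (∑ i, (z i).2) + ((∑ i, ∑ j, α i j * (z i).1 * (z j).1) + ∑ i, β i (z i).1)

def codeShift (a : ι → R) (i : ι) (w : R × R) : R × R :=
  (w.1 - a i,
   w.2 + w.1 * (∑ j, α i j * a j) + w.1 * (∑ j, α j i * a j)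
     - β i (w.1 - a i) + β i w.1 - ∑ j, α i j * a j * a i)

theorem codeShift_bijective (a : ι → R) (i : ι) : Function.Bijective (codeShift α β a i) := by
  convert Prod.bijective_shear (a i) fun x => x * (∑ j, α i j * a j) + x * (∑ j, α j i * a j)
    - β i (x - a i) + β i x - ∑ j, α i j * a j * a i using 1
  funext w
  simp only [codeShift, Prod.mk.injEq, true_and]
  ring

theorem sum_fst_codeShift (a : ι → R) (z : ι → R × R) :
    ∑ i, (codeShift α β a i (z i)).1 = ∑ i, (z i).1 - ∑ i, a i :=
  sum_sub_distrib ..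

theorem quadCheck_codeShift (a : ι → R) (z : ι → R × R) :
    quadCheck α β (fun i => codeShift α β a i (z i)) = quadCheck α β z := by
  simp only [quadCheck, codeShift, sum_add_distrib, sum_sub_distrib]
  rw [quadratic_sub α (fun i => (z i).1) a]
  simp only [mul_add, sum_add_distrib]
  ring

end QuadraticCode

theorem quadratic_code_autotopism_general {n : ℕ}
    {F : Type} [Field F]
    (α : Fin n → Fin n → F) (β : Fin n → F → F)
    (M : Set (Fin n → F × F))
    (hM : M = {z : Fin n → F × F |
      (∑ i, (z i).1) = 0 ∧
      (∑ i, (z i).2) +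
        ((∑ i, ∑ j, α i j * (z i).1 * (z j).1) + ∑ i, β i (z i).1) = 0})
    (u : Fin n → F × F) (hu : u ∈ M)
    (σ : Fin n → F × F → F × F)
    (hσ : ∀ i, σ i = fun w =>
      (w.1 - (u i).1,
       w.2 + w.1 * (∑ j, α i j * (u j).1) + w.1 * (∑ j, α j i * (u j).1)
         - β i (w.1 - (u i).1) + β i w.1 - ∑ j, α i j * (u j).1 * (u i).1)) :
    (∀ i, Function.Bijective (σ i)) ∧
    (∀ z, z ∈ M ↔ (fun i => σ i (z i)) ∈ M) ∧
    (fun i => σ i (u i)) ∈ M ∧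
    (∀ i, (σ i (u i)).1 = 0) := by
  obtain rfl : σ = codeShift α β fun j => (u j).1 := funext hσ
  subst hM
  have hmem (z : Fin n → F × F) :
      (∑ i, (z i).1 = 0 ∧ quadCheck α β z = 0) ↔
        (∑ i, (codeShift α β (fun j => (u j).1) i (z i)).1 = 0 ∧
          quadCheck α β (fun i => codeShift α β (fun j => (u j).1) i (z i)) = 0) := by
    rw [sum_fst_codeShift, quadCheck_codeShift, hu.1, sub_zero]
  exact ⟨codeShift_bijective α β _, hmem, (hmem u).mp hu, fun i => sub_self _⟩

/-- The coordinatewise maps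
`(x,y) ↦ (x - a_i, y + x Σ_j α_{ij} a_j + x Σ_j α_{ji} a_j - β_i(x-a_i) + β_i(x) - Σ_j α_{ij} a_j a_i)`
form an autotopism of the quadratic code `M` sending a codeword `((a_i,b_i))_i`
to a codeword with all `x`-components `0`. -/
theorem quadratic_code_autotopism {p k n : ℕ} (hp : p.Prime)
    {F : Type} [Field F] [Fintype F] [DecidableEq F]
    (hF : Fintype.card F = p ^ k)
    (α : Fin n → Fin n → F) (β : Fin n → F → F) (hβ : ∀ i, β i 0 = 0)
    (M : Set (Fin n → F × F))
    (hM : M = {z : Fin n → F × F |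
      (∑ i, (z i).1) = 0 ∧
      (∑ i, (z i).2) +
        ((∑ i, ∑ j, α i j * (z i).1 * (z j).1) + ∑ i, β i (z i).1) = 0})
    (u : Fin n → F × F) (hu : u ∈ M)
    (σ : Fin n → F × F → F × F)
    (hσ : ∀ i, σ i = fun w =>
      (w.1 - (u i).1,
       w.2 + w.1 * (∑ j, α i j * (u j).1) + w.1 * (∑ j, α j i * (u j).1)
         - β i (w.1 - (u i).1) + β i w.1 - ∑ j, α i j * (u j).1 * (u i).1)) :
    (∀ i, Function.Bijective (σ i)) ∧
    (∀ z, z ∈ M ↔ (fun i => σ i (z i)) ∈ M) ∧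
    (fun i => σ i (u i)) ∈ M ∧
    (∀ i, (σ i (u i)).1 = 0) :=
  quadratic_code_autotopism_general α β M hM u hu σ hσ
end

section
/- With q = p^k, F = GF(q), and r a function of the form Σ_{i,j} α_{ij} x_i x_j + Σ_i β_i(x_i), the MDS code M = {((x_i,y_i))_i ∈ (F×F)^n : Σ x_i = 0, Σ y_i + r(x) = 0} is isotopically transitive: for any two elements of M there is a coordinatewise tuple of permutations of F×F preserving M and sending one to the other. -/
/-- The quadratic MDS code `M ⊆ (F×F)^n` is isotopically transitive. -/
theorem quadratic_code_isoTransitive {p k n : ℕ} (hp : p.Prime)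
    {F : Type} [Field F] [Fintype F] [DecidableEq F]
    (hF : Fintype.card F = p ^ k)
    (α : Fin n → Fin n → F) (β : Fin n → F → F)
    (M : Set (Fin n → F × F))
    (hM : M = {z : Fin n → F × F |
      (∑ i, (z i).1) = 0 ∧
      (∑ i, (z i).2) +
        ((∑ i, ∑ j, α i j * (z i).1 * (z j).1) + ∑ i, β i (z i).1) = 0}) :
    ∀ x ∈ M, ∀ y ∈ M, ∃ τ : Fin n → Equiv.Perm (F × F),
      (∀ z, z ∈ M ↔ (fun i => τ i (z i)) ∈ M) ∧ (fun i => τ i (x i)) = y := by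
  subst hM
  intro x hx y hy
  obtain ⟨hx1, hx2⟩ := hx
  obtain ⟨hy1, hy2⟩ := hy
  set d : Fin n → F := fun i => (y i).1 - (x i).1 with hd
  set s : Fin n → F := fun i => ∑ j, (α i j + α j i) * d j with hs
  set g : Fin n → F → F := fun i a =>
    (y i).2 - (x i).2 - (a - (x i).1) * s i - (β i (a + d i) - β i a)
      + (β i ((x i).1 + d i) - β i ((x i).1)) with hg
  have hxd : ∀ i, (x i).1 + d i = (y i).1 := fun i => by simp [hd]
  have hsd : (∑ i, d i) = 0 := by
    simp [hd, Finset.sum_sub_distrib, hx1, hy1]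
  have quad : ∀ a : Fin n → F,
      (∑ i, ∑ j, α i j * (a i + d i) * (a j + d j)) =
        (∑ i, ∑ j, α i j * a i * a j) + (∑ i, a i * s i)
          + (∑ i, ∑ j, α i j * d i * d j) := by
    intro a
    have hcomm : (∑ i, ∑ j, α i j * d i * a j) = ∑ i, ∑ j, α j i * d j * a i := by
      rw [Finset.sum_comm]
    calc (∑ i, ∑ j, α i j * (a i + d i) * (a j + d j))
        = (∑ i, ∑ j, (α i j * a i * a j + α i j * a i * d j
            + α i j * d i * a j + α i j * d i * d j)) := by
          refine Finset.sum_congr rfl fun i _ => Finset.sum_congr rfl fun j _ => by ring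
      _ = (∑ i, ∑ j, α i j * a i * a j) + (∑ i, ∑ j, α i j * a i * d j)
            + (∑ i, ∑ j, α i j * d i * a j) + (∑ i, ∑ j, α i j * d i * d j) := by
          simp [Finset.sum_add_distrib]
      _ = (∑ i, ∑ j, α i j * a i * a j) + (∑ i, ∑ j, α i j * a i * d j)
            + (∑ i, ∑ j, α j i * d j * a i) + (∑ i, ∑ j, α i j * d i * d j) := by
          rw [hcomm]
      _ = (∑ i, ∑ j, α i j * a i * a j)
            + (∑ i, ((∑ j, α i j * a i * d j) + (∑ j, α j i * d j * a i)))
            + (∑ i, ∑ j, α i j * d i * d j) := by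
          rw [Finset.sum_add_distrib]; ring
      _ = _ := by
          congr 2
          refine Finset.sum_congr rfl fun i _ => ?_
          rw [hs, Finset.mul_sum, ← Finset.sum_add_distrib]
          refine Finset.sum_congr rfl fun j _ => by ring
  have key : ∀ a : Fin n → F,
      (∑ i, g i (a i)) + ((∑ i, ∑ j, α i j * (a i + d i) * (a j + d j))
          + ∑ i, β i (a i + d i))
        = (∑ i, ∑ j, α i j * a i * a j) + ∑ i, β i (a i) := by
    intro a
    have qa := quad a
    have qx := quad (fun i => (x i).1)
    simp only [hxd] at qx
    have hgsum : (∑ i, g i (a i)) =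
        (∑ i, (y i).2) - (∑ i, (x i).2) - ((∑ i, a i * s i) - (∑ i, (x i).1 * s i))
          - ((∑ i, β i (a i + d i)) - (∑ i, β i (a i)))
          + ((∑ i, β i ((y i).1)) - (∑ i, β i ((x i).1))) := by
      simp only [hg, hxd, sub_mul]
      rw [Finset.sum_add_distrib, Finset.sum_sub_distrib, Finset.sum_sub_distrib,
        Finset.sum_sub_distrib, Finset.sum_sub_distrib, Finset.sum_sub_distrib,
        Finset.sum_sub_distrib]
    rw [hgsum]
    linear_combination qa - qx + hy2 - hx2
  refine ⟨fun i => Equiv.prodShear (Equiv.addRight (d i)) (fun a => Equiv.addRight (g i a)),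
    fun z => ?_, ?_⟩
  · simp only [Set.mem_setOf_eq, Equiv.prodShear, Equiv.coe_fn_mk, Equiv.coe_addRight]
    have e1 : (∑ i, ((z i).1 + d i)) = ∑ i, (z i).1 := by
      rw [Finset.sum_add_distrib, hsd, add_zero]
    have e2 := key (fun i => (z i).1)
    have e3 : (∑ i, ((z i).2 + g i ((z i).1)))
          + ((∑ i, ∑ j, α i j * ((z i).1 + d i) * ((z j).1 + d j))
              + ∑ i, β i ((z i).1 + d i))
        = (∑ i, (z i).2) + ((∑ i, ∑ j, α i j * (z i).1 * (z j).1)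
            + ∑ i, β i ((z i).1)) := by
      rw [Finset.sum_add_distrib]
      linear_combination e2
    rw [e1, e3]
  · funext i
    have hg2 : g i ((x i).1) = (y i).2 - (x i).2 := by simp [hg]
    have : (Equiv.prodShear (Equiv.addRight (d i)) (fun a => Equiv.addRight (g i a))) (x i)
        = ((x i).1 + d i, (x i).2 + g i ((x i).1)) := rfl
    rw [this, hxd i, hg2]
    simp [Prod.ext_iff]
end

section
/- The MDS code S_4 = {((x_1,y_1),…,(x_4,y_4)) ∈ (Z_2×Z_2)^4 : x_1⊕x_2⊕x_3⊕x_4 = 0 and y_1⊕y_2⊕y_3⊕y_4 ⊕ x_1x_2x_3 = 0} over the alphabet Z_2 × Z_2 is not isotopically transitive. -/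
/-- The semilinear MDS code `S_4 ⊆ (Z_2 × Z_2)^4` defined by `Σ x_i = 0` and
`Σ y_i + x_1 x_2 x_3 = 0` is not isotopically transitive. -/
theorem S4_not_isoTransitive
    (S : Set (Fin 4 → ZMod 2 × ZMod 2))
    (hS : S = {z : Fin 4 → ZMod 2 × ZMod 2 |
      (∑ i, (z i).1) = 0 ∧
      (∑ i, (z i).2) + (z 0).1 * (z 1).1 * (z 2).1 = 0}) :
    ¬ ∀ x ∈ S, ∀ y ∈ S, ∃ τ : Fin 4 → Equiv.Perm (ZMod 2 × ZMod 2),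
        (∀ z, z ∈ S ↔ (fun i => τ i (z i)) ∈ S) ∧ (fun i => τ i (x i)) = y := by
  intro h
  have hSmem : ∀ z : Fin 4 → ZMod 2 × ZMod 2, z ∈ S ↔
      ((z 0).1 + (z 1).1 + (z 2).1 + (z 3).1 = 0 ∧
       (z 0).2 + (z 1).2 + (z 2).2 + (z 3).2 + (z 0).1 * (z 1).1 * (z 2).1 = 0) := by
    intro z
    subst hS
    simp [Set.mem_setOf_eq, Fin.sum_univ_four, add_assoc]
  set x0 : Fin 4 → ZMod 2 × ZMod 2 := fun _ => (0, 0) with hx0def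
  set y0 : Fin 4 → ZMod 2 × ZMod 2 := ![(1, 0), (1, 0), (0, 0), (0, 0)] with hy0def
  have hx0 : x0 ∈ S := by rw [hSmem]; decide
  have hy0 : y0 ∈ S := by
    rw [hSmem]
    constructor <;> decide
  obtain ⟨τ, hpres, hmap⟩ := h x0 hx0 y0 hy0
  have ht0 : τ 0 (0, 0) = (1, 0) := congrFun hmap 0
  have ht1 : τ 1 (0, 0) = (1, 0) := congrFun hmap 1
  have ht2 : τ 2 (0, 0) = (0, 0) := congrFun hmap 2
  have ht3 : τ 3 (0, 0) = (0, 0) := congrFun hmap 3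
  -- helper lemmas on the alphabet
  have help02 : ∀ u v : ZMod 2 × ZMod 2,
      (u.1 + 1 + v.1 + 0 = 0 ∧ u.2 + 0 + v.2 + 0 + u.1 * 1 * v.1 = 0) →
      v = (u.1 + 1, u.2) := by decide
  have help23 : ∀ u v : ZMod 2 × ZMod 2,
      (1 + 1 + u.1 + v.1 = 0 ∧ 0 + 0 + u.2 + v.2 + 1 * 1 * u.1 = 0) →
      v = (u.1, u.2 + u.1) := by decide
  have help30 : ∀ u v : ZMod 2 × ZMod 2,
      (u.1 + 1 + 0 + v.1 = 0 ∧ u.2 + 0 + 0 + v.2 + u.1 * 1 * 0 = 0) →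
      u = (v.1 + 1, v.2) := by decide
  -- step along coordinates 0 → 2 → 3 → 0
  have h02 : ∀ a : ZMod 2 × ZMod 2, τ 2 a = ((τ 0 a).1 + 1, (τ 0 a).2) := by
    intro a
    have hw : (![a, (0, 0), a, (0, 0)] : Fin 4 → ZMod 2 × ZMod 2) ∈ S := by
      rw [hSmem]
      revert a; decide
    have h1 := (hSmem _).mp ((hpres _).mp hw)
    simp only [Matrix.cons_val_zero, Matrix.cons_val_one, Matrix.head_cons,
      Matrix.cons_val_two, Matrix.tail_cons, Matrix.cons_val_three] at h1
    rw [ht1, ht3] at h1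
    exact help02 (τ 0 a) (τ 2 a) h1
  have h23 : ∀ a : ZMod 2 × ZMod 2, τ 3 a = ((τ 2 a).1, (τ 2 a).2 + (τ 2 a).1) := by
    intro a
    have hw : (![(0, 0), (0, 0), a, a] : Fin 4 → ZMod 2 × ZMod 2) ∈ S := by
      rw [hSmem]
      revert a; decide
    have h1 := (hSmem _).mp ((hpres _).mp hw)
    simp only [Matrix.cons_val_zero, Matrix.cons_val_one, Matrix.head_cons,
      Matrix.cons_val_two, Matrix.tail_cons, Matrix.cons_val_three] at h1
    rw [ht0, ht1] at h1
    exact help23 (τ 2 a) (τ 3 a) h1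
  have h30 : ∀ a : ZMod 2 × ZMod 2, τ 0 a = ((τ 3 a).1 + 1, (τ 3 a).2) := by
    intro a
    have hw : (![a, (0, 0), (0, 0), a] : Fin 4 → ZMod 2 × ZMod 2) ∈ S := by
      rw [hSmem]
      revert a; decide
    have h1 := (hSmem _).mp ((hpres _).mp hw)
    simp only [Matrix.cons_val_zero, Matrix.cons_val_one, Matrix.head_cons,
      Matrix.cons_val_two, Matrix.tail_cons, Matrix.cons_val_three] at h1
    rw [ht1, ht2] at h1
    exact help30 (τ 0 a) (τ 3 a) h1
  -- conclude (τ 0 a).1 = 1 for all a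
  have hone : ∀ a : ZMod 2 × ZMod 2, (τ 0 a).1 = 1 := by
    intro a
    have e1 := h02 a
    have e2 := h23 a
    have e3 := h30 a
    rw [e2, e1] at e3
    have key : ∀ u : ZMod 2 × ZMod 2,
        u = (((u.1 + 1, u.2).1, (u.1 + 1, u.2).2 + (u.1 + 1, u.2).1).1 + 1,
             ((u.1 + 1, u.2).1, (u.1 + 1, u.2).2 + (u.1 + 1, u.2).1).2) → u.1 = 1 := by
      decide
    exact key (τ 0 a) e3
  obtain ⟨a, ha⟩ := (τ 0).surjective (0, 0)
  have := hone a
  rw [ha] at this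
  exact absurd this (by decide)
end
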